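/- arXiv:0902.0953 — 9 statements merged into one kernel-verified Lean document; each statement's English description precedes it below -/
import Mathlib

section
/- Let n ≥ 1 and let L be the (1,1) tensor field on the vector space Mat_n(ℝ) of real n×n matrices defined by (LX)(p) = p·X(p) for a vector field X (a smooth map X : Mat_n(ℝ) → Mat_n(ℝ)). Then the Nijenhuis torsion of L vanishes: for all smooth vector fields X, Y on Mat_n(ℝ), [LX, LY] − L([LX, Y] + [X, LY] − L[X, Y]) = 0, where the Lie bracket of vector fields is [X,Y](p) = DY_p(X(p)) − DX_p(Y(p)) (D denoting the Fréchet derivative). -/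
/- STATEMENT 0: the (1,1) tensor field `L X = fun p => p * X p` on Mat_n(ℝ) has
vanishing Nijenhuis torsion:
[LX, LY] − L([LX, Y] + [X, LY] − L[X, Y]) = 0 for all smooth vector fields X, Y,
where [X,Y](p) = DY_p(X(p)) − DX_p(Y(p)). -/

attribute [local instance] Matrix.frobeniusNormedAddCommGroup Matrix.frobeniusNormedSpace

/-- The space of real n×n matrices. -/
abbrev Mat (n : ℕ) := Matrix (Fin n) (Fin n) ℝ

/-- The (1,1) tensor field `L`: (L X)(p) = p · X(p). -/
def tensL {n : ℕ} (X : Mat n → Mat n) : Mat n → Mat n := fun p => p * X p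

/-- The Lie bracket of vector fields on Mat_n(ℝ):
[X,Y](p) = DY_p(X(p)) − DX_p(Y(p)). -/
noncomputable def lieVF {n : ℕ} (X Y : Mat n → Mat n) : Mat n → Mat n :=
  fun p => fderiv ℝ Y p (X p) - fderiv ℝ X p (Y p)

attribute [local instance] Matrix.frobeniusNormedRing Matrix.frobeniusNormedAlgebra

set_option maxHeartbeats 1000000 in
/-- Derivative of `tensL X`: D(p ↦ p·X(p)) at p applied to v is p·DX_p(v) + v·X(p). -/
lemma fderiv_tensL {n : ℕ} {X : Mat n → Mat n} (hX : ContDiff ℝ (⊤ : ℕ∞) X) (p v : Mat n) :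
    fderiv ℝ (tensL X) p v = p * fderiv ℝ X p v + v * X p := by
  have h : HasFDerivAt (tensL X)
      ((id p : Mat n) • fderiv ℝ X p
        + (ContinuousLinearMap.id ℝ (Mat n)).smulRight (X p)) p :=
    (hasFDerivAt_id p).mul' (hX.differentiable (by simp) p).hasFDerivAt
  rw [h.fderiv]
  simp [smul_eq_mul]

theorem nijenhuis_torsion_of_left_mult_vanishes (n : ℕ) (hn : 1 ≤ n)
    (X Y : Mat n → Mat n) (hX : ContDiff ℝ (⊤ : ℕ∞) X) (hY : ContDiff ℝ (⊤ : ℕ∞) Y) :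
    ∀ p : Mat n,
      lieVF (tensL X) (tensL Y) p
        - tensL (fun q => lieVF (tensL X) Y q + lieVF X (tensL Y) q
            - tensL (lieVF X Y) q) p = 0 := by
  intro p
  simp only [lieVF, tensL, fderiv_tensL hX, fderiv_tensL hY]
  noncomm_ring
end

section
/- Let n ≥ 1. The two brackets {F,G}_0(A,B) = tr(η_F ξ_G − ξ_F η_G) and {F,G}_1(A,B) = tr(A(η_F ξ_G − η_G ξ_F) + B[η_F, η_G]) on smooth functions on Mat_n(ℝ) × Mat_n(ℝ) are compatible: for every λ ∈ ℝ the bracket {F,G}_λ := {F,G}_0 + λ{F,G}_1 satisfies the Jacobi identity {{F,G}_λ, H}_λ + {{G,H}_λ, F}_λ + {{H,F}_λ, G}_λ = 0 for all smooth functions F, G, H : Mat_n(ℝ) × Mat_n(ℝ) → ℝ. -/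
/- STATEMENT 2: the brackets {F,G}_0(A,B) = tr(η_F ξ_G − ξ_F η_G) and
{F,G}_1(A,B) = tr(A(η_F ξ_G − η_G ξ_F) + B[η_F, η_G]) on smooth functions on
Mat_n(ℝ) × Mat_n(ℝ) are compatible: every linear combination
{F,G}_λ = {F,G}_0 + λ{F,G}_1 satisfies the Jacobi identity.
Here (ξ_F, η_F) is the gradient of F at (A,B), determined by
dF_{(A,B)}(V,W) = tr(ξ_F V) + tr(η_F W); it is encoded below via the Fréchet
derivative: (ξ_F)_{ij} = dF(E_{ji}, 0) and (η_F)_{ij} = dF(0, E_{ji}), where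
E_{ji} is the elementary matrix with a single 1 in position (j,i), since
tr(ξ E_{ji}) = ξ_{ij}. -/

attribute [local instance] Matrix.frobeniusNormedAddCommGroup Matrix.frobeniusNormedSpace

/-- The first component ξ_F of the gradient of F : Mat_n × Mat_n → ℝ,
characterized by dF_{(A,B)}(V,W) = tr(ξ_F V) + tr(η_F W). -/
noncomputable def gradA {n : ℕ} (F : Mat n × Mat n → ℝ) (p : Mat n × Mat n) : Mat n :=
  Matrix.of fun i j => fderiv ℝ F p (Matrix.single j i 1, 0)

/-- The second component η_F of the gradient of F : Mat_n × Mat_n → ℝ. -/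
noncomputable def gradB {n : ℕ} (F : Mat n × Mat n → ℝ) (p : Mat n × Mat n) : Mat n :=
  Matrix.of fun i j => fderiv ℝ F p (0, Matrix.single j i 1)

/-- The second Poisson bracket
{F,G}_1(A,B) = tr(A(η_F ξ_G − η_G ξ_F) + B[η_F, η_G]). -/
noncomputable def bracket1 {n : ℕ} (F G : Mat n × Mat n → ℝ) (p : Mat n × Mat n) : ℝ :=
  Matrix.trace (p.1 * (gradB F p * gradA G p - gradB G p * gradA F p)
    + p.2 * (gradB F p * gradB G p - gradB G p * gradB F p))

/-- The first Poisson (canonical) bracket {F,G}_0(A,B) = tr(η_F ξ_G − ξ_F η_G). -/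
noncomputable def bracket0 {n : ℕ} (F G : Mat n × Mat n → ℝ) (p : Mat n × Mat n) : ℝ :=
  Matrix.trace (gradB F p * gradA G p - gradA F p * gradB G p)

/-- The pencil bracket {F,G}_λ = {F,G}_0 + λ{F,G}_1. -/
noncomputable def bracketPencil {n : ℕ} (lam : ℝ) (F G : Mat n × Mat n → ℝ)
    (p : Mat n × Mat n) : ℝ :=
  bracket0 F G p + lam * bracket1 F G p

section Aux
attribute [local instance] Matrix.frobeniusNormedRing Matrix.frobeniusNormedAlgebra

variable {n : ℕ}

/-- the combined gradient -/
noncomputable def gr (F : Mat n × Mat n → ℝ) (p : Mat n × Mat n) : Mat n × Mat n :=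
  (gradA F p, gradB F p)

/-- the pairing ⟨(ξ,η),(V,W)⟩ = tr(ξV) + tr(ηW) -/
noncomputable def pr (u v : Mat n × Mat n) : ℝ :=
  Matrix.trace (u.1 * v.1) + Matrix.trace (u.2 * v.2)

lemma clm_pr (L : (Mat n × Mat n) →L[ℝ] ℝ) (v : Mat n × Mat n) :
    L v = pr (Matrix.of fun i j => L (Matrix.single j i 1, 0),
              Matrix.of fun i j => L (0, Matrix.single j i 1)) v := by
  have h1 : (v.1, (0 : Mat n)) =
      ∑ j : Fin n, ∑ i : Fin n, v.1 j i • ((Matrix.single j i 1 : Mat n), (0 : Mat n)) := by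
    apply Prod.ext <;> simp [Prod.fst_sum, Prod.snd_sum, Matrix.smul_single,
      ← Matrix.matrix_eq_sum_single]
  have h2 : ((0 : Mat n), v.2) =
      ∑ j : Fin n, ∑ i : Fin n, v.2 j i • (((0 : Mat n), Matrix.single j i 1)) := by
    apply Prod.ext <;> simp [Prod.fst_sum, Prod.snd_sum, Matrix.smul_single,
      ← Matrix.matrix_eq_sum_single]
  have hv : v = (v.1, (0:Mat n)) + ((0:Mat n), v.2) := by simp
  have hL : L v = (∑ j : Fin n, ∑ i : Fin n, v.1 j i * L (Matrix.single j i 1, 0))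
      + (∑ j : Fin n, ∑ i : Fin n, v.2 j i * L (0, Matrix.single j i 1)) := by
    conv_lhs => rw [hv, map_add, h1, h2]
    simp only [map_sum, map_smul, smul_eq_mul]
  rw [hL]
  unfold pr
  simp only [Matrix.trace, Matrix.diag, Matrix.mul_apply, Matrix.of_apply]
  congr 1
  · rw [Finset.sum_comm]
    exact Finset.sum_congr rfl fun j _ => Finset.sum_congr rfl fun i _ => mul_comm _ _
  · rw [Finset.sum_comm]
    exact Finset.sum_congr rfl fun j _ => Finset.sum_congr rfl fun i _ => mul_comm _ _

lemma grad_spec (F : Mat n × Mat n → ℝ) (p v : Mat n × Mat n) :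
    fderiv ℝ F p v = pr (gr F p) v :=
  clm_pr (fderiv ℝ F p) v


noncomputable def matCLE : ((Fin n × Fin n) → ℝ) ≃L[ℝ] Mat n :=
  LinearEquiv.toContinuousLinearEquiv
    ((LinearEquiv.curry ℝ ℝ (Fin n) (Fin n)).trans
      { Matrix.of with map_add' := fun _ _ => rfl, map_smul' := fun _ _ => rfl })

lemma contDiff_matrix {EE : Type*} [NormedAddCommGroup EE] [NormedSpace ℝ EE]
    {f : EE → Mat n} (h : ∀ i j, ContDiff ℝ (⊤ : ℕ∞) (fun x => f x i j)) : ContDiff ℝ (⊤ : ℕ∞) f := by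
  have : f = fun x => matCLE (fun ij => f x ij.1 ij.2) := by ext x i j; rfl
  rw [this]
  exact (matCLE.contDiff).comp (contDiff_pi.2 fun ij => h ij.1 ij.2)

lemma contDiff_gr {F : Mat n × Mat n → ℝ} (hF : ContDiff ℝ (⊤ : ℕ∞) F) :
    ContDiff ℝ (⊤ : ℕ∞) (gr F) := by
  apply ContDiff.prodMk <;>
    exact contDiff_matrix fun i j => (hF.fderiv_right (by simp)).clm_apply contDiff_const

/-- the "Hamiltonian vector field"-type map: pr u (XX lam p v) is the Poisson tensor -/
noncomputable def XX (lam : ℝ) (p u : Mat n × Mat n) : Mat n × Mat n :=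
  (-u.2 - lam • (p.1 * u.2),
   u.1 + lam • (u.1 * p.1) + lam • (u.2 * p.2 - p.2 * u.2))

/-- derivative of XX in the p slot -/
noncomputable def XL (lam : ℝ) (w u : Mat n × Mat n) : Mat n × Mat n :=
  (-(lam • (w.1 * u.2)),
   lam • (u.1 * w.1) + lam • (u.2 * w.2 - w.2 * u.2))

/-- the Hamiltonian vector field of G -/
noncomputable def YY (lam : ℝ) (G : Mat n × Mat n → ℝ) (p : Mat n × Mat n) : Mat n × Mat n :=
  XX lam p (gr G p)

lemma contDiff_YY {G : Mat n × Mat n → ℝ} (hG : ContDiff ℝ (⊤ : ℕ∞) G) (lam : ℝ) :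
    ContDiff ℝ (⊤ : ℕ∞) (YY lam G) := by
  have h1 : ContDiff ℝ (⊤ : ℕ∞) (fun p : Mat n × Mat n => (gr G p).1) :=
    contDiff_fst.comp (contDiff_gr hG)
  have h2 : ContDiff ℝ (⊤ : ℕ∞) (fun p : Mat n × Mat n => (gr G p).2) :=
    contDiff_snd.comp (contDiff_gr hG)
  unfold YY XX
  exact ((h2.neg.sub ((contDiff_fst.mul h2).const_smul lam)).prodMk
    ((h1.add ((h1.mul contDiff_fst).const_smul lam)).add
      (((h2.mul contDiff_snd).sub (contDiff_snd.mul h2)).const_smul lam)))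

lemma fderiv_YY (lam : ℝ) {G : Mat n × Mat n → ℝ} (hG : ContDiff ℝ (⊤ : ℕ∞) G)
    (p w : Mat n × Mat n) :
    fderiv ℝ (YY lam G) p w = XX lam p (fderiv ℝ (gr G) p w) + XL lam w (gr G p) := by
  have hD : HasFDerivAt (gr G) (fderiv ℝ (gr G) p) p :=
    (((contDiff_gr hG).differentiable (by simp)) p).hasFDerivAt
  set D := fderiv ℝ (gr G) p
  have h1 : HasFDerivAt (fun q : Mat n × Mat n => (gr G q).1)
      ((ContinuousLinearMap.fst ℝ (Mat n) (Mat n)).comp D) p :=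
    (ContinuousLinearMap.fst ℝ (Mat n) (Mat n)).hasFDerivAt.comp p hD
  have h2 : HasFDerivAt (fun q : Mat n × Mat n => (gr G q).2)
      ((ContinuousLinearMap.snd ℝ (Mat n) (Mat n)).comp D) p :=
    (ContinuousLinearMap.snd ℝ (Mat n) (Mat n)).hasFDerivAt.comp p hD
  have hfst : HasFDerivAt (fun q : Mat n × Mat n => q.1)
      (ContinuousLinearMap.fst ℝ (Mat n) (Mat n)) p := hasFDerivAt_fst
  have hsnd : HasFDerivAt (fun q : Mat n × Mat n => q.2)
      (ContinuousLinearMap.snd ℝ (Mat n) (Mat n)) p := hasFDerivAt_snd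
  have hY : HasFDerivAt (YY lam G) _ p :=
    (((h2.neg).sub ((hfst.mul' h2).const_smul lam)).prodMk
      (((h1.add ((h1.mul' hfst).const_smul lam)).add
        (((h2.mul' hsnd).sub (hsnd.mul' h2)).const_smul lam))))
  rw [hY.fderiv]
  change (-(D w).2 - lam • (p.1 * (D w).2 + w.1 * (gr G p).2),
    (D w).1 + lam • ((gr G p).1 * w.1 + (D w).1 * p.1)
      + lam • (((gr G p).2 * w.2 + (D w).2 * p.2) - (p.2 * (D w).2 + w.2 * (gr G p).2))) = _
  apply Prod.ext <;>
    · simp only [XX, XL, Prod.fst_add, Prod.snd_add, smul_add, smul_sub]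
      abel

lemma tr3 (x y z : Mat n) :
    (x * (y * z)).trace = (z * (x * y)).trace := by
  rw [← Matrix.mul_assoc, Matrix.trace_mul_comm]

noncomputable def prCLM (z : Mat n × Mat n) : (Mat n × Mat n) →L[ℝ] ℝ :=
  LinearMap.toContinuousLinearMap
    { toFun := fun u => pr u z
      map_add' := by
        intro a b
        simp [pr, Matrix.add_mul, Matrix.trace_add]
        ring
      map_smul' := by
        intro c a
        simp [pr, Matrix.smul_mul, Matrix.trace_smul]
        ring }

lemma pr_fderiv_gr {G : Mat n × Mat n → ℝ} (hG : ContDiff ℝ (⊤ : ℕ∞) G) (p w z : Mat n × Mat n) :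
    pr (fderiv ℝ (gr G) p w) z = fderiv ℝ (fderiv ℝ G) p w z := by
  have hgr : HasFDerivAt (gr G) (fderiv ℝ (gr G) p) p :=
    (((contDiff_gr hG).differentiable (by simp)) p).hasFDerivAt
  have hc : DifferentiableAt ℝ (fderiv ℝ G) p :=
    ((hG.fderiv_right (m := (⊤ : ℕ∞)) (by simp)).differentiable (by simp)) p
  have hcomp : HasFDerivAt (fun q => prCLM z (gr G q))
      ((prCLM z).comp (fderiv ℝ (gr G) p)) p := (prCLM z).hasFDerivAt.comp p hgr
  have h1 : pr (fderiv ℝ (gr G) p w) z = fderiv ℝ (fun q => prCLM z (gr G q)) p w := by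
    rw [hcomp.fderiv]; rfl
  have h2 : (fun q => prCLM z (gr G q)) = fun q => fderiv ℝ G q z := by
    funext q
    show pr (gr G q) z = _
    exact (grad_spec G q z).symm
  rw [h1, h2]
  refine (congrArg (fun L => L w) (fderiv_clm_apply hc (differentiableAt_const z))).trans ?_
  change fderiv ℝ G p (fderiv ℝ (fun _ : Mat n × Mat n => z) p w) + fderiv ℝ (fderiv ℝ G) p w z = _
  rw [show fderiv ℝ (fun _ : Mat n × Mat n => z) p = 0 from fderiv_const_apply z,
    ContinuousLinearMap.zero_apply, map_zero, zero_add]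

lemma pr_XX (lam : ℝ) (A B f1 f2 g1 g2 : Mat n) :
    pr (f1, f2) (XX lam (A, B) (g1, g2)) =
      Matrix.trace (f2 * g1 - f1 * g2)
        + lam * Matrix.trace (A * (f2 * g1 - g2 * f1) + B * (f2 * g2 - g2 * f2)) := by
  simp only [pr, XX, XL, Matrix.mul_add, Matrix.add_mul, Matrix.mul_sub, Matrix.sub_mul,
    Matrix.mul_neg, Matrix.neg_mul, Matrix.mul_smul, Matrix.smul_mul, Matrix.trace_add,
    Matrix.trace_sub, Matrix.trace_neg, Matrix.trace_smul, smul_eq_mul, Matrix.mul_assoc]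
  ring_nf
  rw [tr3 f2 g1 A, tr3 f1 A g2, tr3 g2 f1 A, tr3 f2 g2 B, tr3 f2 B g2, tr3 g2 f2 B]
  ring

lemma tr4 (x y z t : Mat n) :
    (x * (y * (z * t))).trace = (t * (x * (y * z))).trace := by
  rw [← Matrix.mul_assoc, ← Matrix.mul_assoc, Matrix.trace_mul_comm, Matrix.mul_assoc]

lemma pr_XX_antisym (lam : ℝ) (p u v : Mat n × Mat n) :
    pr u (XX lam p v) = - pr v (XX lam p u) := by
  obtain ⟨A, B⟩ := p; obtain ⟨f1, f2⟩ := u; obtain ⟨g1, g2⟩ := v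
  rw [pr_XX, pr_XX]
  simp only [Matrix.mul_sub, Matrix.mul_add, Matrix.trace_sub, Matrix.trace_add]
  rw [Matrix.trace_mul_comm f2 g1, Matrix.trace_mul_comm f1 g2]
  ring

lemma key (lam : ℝ) (p u v w : Mat n × Mat n) :
    pr u (XL lam (XX lam p w) v) + pr v (XL lam (XX lam p u) w)
      + pr w (XL lam (XX lam p v) u) = 0 := by
  obtain ⟨A, B⟩ := p
  obtain ⟨f1, f2⟩ := u; obtain ⟨g1, g2⟩ := v; obtain ⟨h1, h2⟩ := w
  simp only [pr, XX, XL, Matrix.mul_add, Matrix.add_mul, Matrix.mul_sub, Matrix.sub_mul,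
    Matrix.mul_neg, Matrix.neg_mul, Matrix.mul_smul, Matrix.smul_mul, Matrix.trace_add,
    Matrix.trace_sub, Matrix.trace_neg, Matrix.trace_smul, smul_eq_mul, Matrix.mul_assoc,
    smul_sub, smul_add, smul_neg, neg_smul]
  ring_nf
  have e1 : (g1 * (f2 * (h2))).trace = (f2 * (h2 * (g1))).trace := by rw [tr3 g1 f2 h2, tr3 h2 g1 f2]
  have e2 : (g2 * (h1 * (f2))).trace = (f2 * (g2 * (h1))).trace := by rw [tr3 g2 h1 f2]
  have e3 : (g2 * (h2 * (f1))).trace = (f1 * (g2 * (h2))).trace := by rw [tr3 g2 h2 f1]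
  have e4 : (g2 * (f1 * (h2))).trace = (f1 * (h2 * (g2))).trace := by rw [tr3 g2 f1 h2, tr3 h2 g2 f1]
  have e5 : (h1 * (g2 * (f2))).trace = (f2 * (h1 * (g2))).trace := by rw [tr3 h1 g2 f2]
  have e6 : (h2 * (f1 * (g2))).trace = (f1 * (g2 * (h2))).trace := by rw [tr3 h2 f1 g2, tr3 g2 h2 f1]
  have e7 : (h2 * (f2 * (g1))).trace = (f2 * (g1 * (h2))).trace := by rw [tr3 h2 f2 g1, tr3 g1 h2 f2]
  have e8 : (h2 * (g1 * (f2))).trace = (f2 * (h2 * (g1))).trace := by rw [tr3 h2 g1 f2]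
  have e9 : (f1 * (A * (h2 * (g2)))).trace = (A * (h2 * (g2 * (f1)))).trace := by rw [tr4 f1 A h2 g2, tr4 g2 f1 A h2, tr4 h2 g2 f1 A]
  have e10 : (f2 * (g1 * (A * (h2)))).trace = (A * (h2 * (f2 * (g1)))).trace := by rw [tr4 f2 g1 A h2, tr4 h2 f2 g1 A]
  have e11 : (f2 * (g2 * (h1 * (A)))).trace = (A * (f2 * (g2 * (h1)))).trace := by rw [tr4 f2 g2 h1 A]
  have e12 : (f2 * (g2 * (h2 * (B)))).trace = (B * (f2 * (g2 * (h2)))).trace := by rw [tr4 f2 g2 h2 B]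
  have e13 : (f2 * (g2 * (B * (h2)))).trace = (B * (h2 * (f2 * (g2)))).trace := by rw [tr4 f2 g2 B h2, tr4 h2 f2 g2 B]
  have e14 : (f2 * (h1 * (A * (g2)))).trace = (A * (g2 * (f2 * (h1)))).trace := by rw [tr4 f2 h1 A g2, tr4 g2 f2 h1 A]
  have e15 : (f2 * (h2 * (B * (g2)))).trace = (B * (g2 * (f2 * (h2)))).trace := by rw [tr4 f2 h2 B g2, tr4 g2 f2 h2 B]
  have e16 : (f2 * (B * (h2 * (g2)))).trace = (B * (h2 * (g2 * (f2)))).trace := by rw [tr4 f2 B h2 g2, tr4 g2 f2 B h2, tr4 h2 g2 f2 B]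
  have e17 : (g1 * (A * (f2 * (h2)))).trace = (A * (f2 * (h2 * (g1)))).trace := by rw [tr4 g1 A f2 h2, tr4 h2 g1 A f2, tr4 f2 h2 g1 A]
  have e18 : (g2 * (h1 * (A * (f2)))).trace = (A * (f2 * (g2 * (h1)))).trace := by rw [tr4 g2 h1 A f2, tr4 f2 g2 h1 A]
  have e19 : (g2 * (h2 * (f1 * (A)))).trace = (A * (g2 * (h2 * (f1)))).trace := by rw [tr4 g2 h2 f1 A]
  have e20 : (g2 * (h2 * (f2 * (B)))).trace = (B * (g2 * (h2 * (f2)))).trace := by rw [tr4 g2 h2 f2 B]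
  have e21 : (g2 * (h2 * (B * (f2)))).trace = (B * (f2 * (g2 * (h2)))).trace := by rw [tr4 g2 h2 B f2, tr4 f2 g2 h2 B]
  have e22 : (g2 * (f1 * (A * (h2)))).trace = (A * (h2 * (g2 * (f1)))).trace := by rw [tr4 g2 f1 A h2, tr4 h2 g2 f1 A]
  have e23 : (g2 * (f2 * (B * (h2)))).trace = (B * (h2 * (g2 * (f2)))).trace := by rw [tr4 g2 f2 B h2, tr4 h2 g2 f2 B]
  have e24 : (g2 * (B * (f2 * (h2)))).trace = (B * (f2 * (h2 * (g2)))).trace := by rw [tr4 g2 B f2 h2, tr4 h2 g2 B f2, tr4 f2 h2 g2 B]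
  have e25 : (h1 * (A * (g2 * (f2)))).trace = (A * (g2 * (f2 * (h1)))).trace := by rw [tr4 h1 A g2 f2, tr4 f2 h1 A g2, tr4 g2 f2 h1 A]
  have e26 : (h2 * (f1 * (A * (g2)))).trace = (A * (g2 * (h2 * (f1)))).trace := by rw [tr4 h2 f1 A g2, tr4 g2 h2 f1 A]
  have e27 : (h2 * (f2 * (g1 * (A)))).trace = (A * (h2 * (f2 * (g1)))).trace := by rw [tr4 h2 f2 g1 A]
  have e28 : (h2 * (f2 * (g2 * (B)))).trace = (B * (h2 * (f2 * (g2)))).trace := by rw [tr4 h2 f2 g2 B]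
  have e29 : (h2 * (f2 * (B * (g2)))).trace = (B * (g2 * (h2 * (f2)))).trace := by rw [tr4 h2 f2 B g2, tr4 g2 h2 f2 B]
  have e30 : (h2 * (g1 * (A * (f2)))).trace = (A * (f2 * (h2 * (g1)))).trace := by rw [tr4 h2 g1 A f2, tr4 f2 h2 g1 A]
  have e31 : (h2 * (g2 * (B * (f2)))).trace = (B * (f2 * (h2 * (g2)))).trace := by rw [tr4 h2 g2 B f2, tr4 f2 h2 g2 B]
  have e32 : (h2 * (B * (g2 * (f2)))).trace = (B * (g2 * (f2 * (h2)))).trace := by rw [tr4 h2 B g2 f2, tr4 f2 h2 B g2, tr4 g2 f2 h2 B]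
  rw [e1, e2, e3, e4, e5, e6, e7, e8, e9, e10, e11, e12, e13, e14, e15, e16, e17, e18, e19, e20, e21, e22, e23, e24, e25, e26, e27, e28, e29, e30, e31, e32]
  ring

lemma bracket_eq (lam : ℝ) (F G : Mat n × Mat n → ℝ) (p : Mat n × Mat n) :
    bracketPencil lam F G p = fderiv ℝ F p (YY lam G p) := by
  rw [grad_spec F p (YY lam G p)]
  unfold bracketPencil bracket0 bracket1
  exact (pr_XX lam p.1 p.2 (gradA F p) (gradB F p) (gradA G p) (gradB G p)).symm

lemma bracket_fderiv (lam : ℝ) {F G : Mat n × Mat n → ℝ}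
    (hF : ContDiff ℝ (⊤ : ℕ∞) F) (hG : ContDiff ℝ (⊤ : ℕ∞) G) (p w : Mat n × Mat n) :
    fderiv ℝ (bracketPencil lam F G) p w
      = fderiv ℝ (fderiv ℝ F) p w (YY lam G p)
        + fderiv ℝ F p (XX lam p (fderiv ℝ (gr G) p w))
        + fderiv ℝ F p (XL lam w (gr G p)) := by
  have hfun : bracketPencil lam F G = fun q => fderiv ℝ F q (YY lam G q) :=
    funext fun q => bracket_eq lam F G q
  have hYd : DifferentiableAt ℝ (YY lam G) p := ((contDiff_YY hG lam).differentiable (by simp)) p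
  have hFd : DifferentiableAt ℝ (fderiv ℝ F) p :=
    ((hF.fderiv_right (m := (⊤ : ℕ∞)) (by simp)).differentiable (by simp)) p
  rw [hfun]
  refine (congrArg (fun L => L w) (fderiv_clm_apply hFd hYd)).trans ?_
  change fderiv ℝ F p (fderiv ℝ (YY lam G) p w) + fderiv ℝ (fderiv ℝ F) p w (YY lam G p) = _
  rw [fderiv_YY lam hG p w, map_add]
  ring

lemma term_eq (lam : ℝ) {F G H : Mat n × Mat n → ℝ}
    (hF : ContDiff ℝ (⊤ : ℕ∞) F) (hG : ContDiff ℝ (⊤ : ℕ∞) G) (hH : ContDiff ℝ (⊤ : ℕ∞) H)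
    (p : Mat n × Mat n) :
    bracketPencil lam (bracketPencil lam F G) H p
      = fderiv ℝ (fderiv ℝ F) p (YY lam H p) (YY lam G p)
        - fderiv ℝ (fderiv ℝ G) p (YY lam H p) (YY lam F p)
        + pr (gr F p) (XL lam (YY lam H p) (gr G p)) := by
  rw [bracket_eq lam (bracketPencil lam F G) H p,
    bracket_fderiv lam hF hG p (YY lam H p),
    grad_spec F p (XX lam p (fderiv ℝ (gr G) p (YY lam H p))),
    pr_XX_antisym lam p (gr F p) (fderiv ℝ (gr G) p (YY lam H p)),
    pr_fderiv_gr hG p (YY lam H p) (XX lam p (gr F p)),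
    grad_spec F p (XL lam (YY lam H p) (gr G p)),
    show XX lam p (gr F p) = YY lam F p from rfl]
  ring

lemma jacobi (lam : ℝ) {F G H : Mat n × Mat n → ℝ}
    (hF : ContDiff ℝ (⊤ : ℕ∞) F) (hG : ContDiff ℝ (⊤ : ℕ∞) G) (hH : ContDiff ℝ (⊤ : ℕ∞) H)
    (p : Mat n × Mat n) :
    bracketPencil lam (bracketPencil lam F G) H p
      + bracketPencil lam (bracketPencil lam G H) F p
      + bracketPencil lam (bracketPencil lam H F) G p = 0 := by
  have hsF := (hF.contDiffAt (x := p)).isSymmSndFDerivAt (by rw [minSmoothness_of_isRCLikeNormedField]; exact WithTop.coe_le_coe.2 (le_top : (2 : ℕ∞) ≤ ⊤))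
  have hsG := (hG.contDiffAt (x := p)).isSymmSndFDerivAt (by rw [minSmoothness_of_isRCLikeNormedField]; exact WithTop.coe_le_coe.2 (le_top : (2 : ℕ∞) ≤ ⊤))
  have hsH := (hH.contDiffAt (x := p)).isSymmSndFDerivAt (by rw [minSmoothness_of_isRCLikeNormedField]; exact WithTop.coe_le_coe.2 (le_top : (2 : ℕ∞) ≤ ⊤))
  have hk : pr (gr F p) (XL lam (YY lam H p) (gr G p))
      + pr (gr G p) (XL lam (YY lam F p) (gr H p))
      + pr (gr H p) (XL lam (YY lam G p) (gr F p)) = 0 :=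
    key lam p (gr F p) (gr G p) (gr H p)
  rw [term_eq lam hF hG hH p, term_eq lam hG hH hF p, term_eq lam hH hF hG p]
  have e1 : fderiv ℝ (fderiv ℝ F) p (YY lam H p) (YY lam G p)
      = fderiv ℝ (fderiv ℝ F) p (YY lam G p) (YY lam H p) := hsF _ _
  have e2 : fderiv ℝ (fderiv ℝ G) p (YY lam F p) (YY lam H p)
      = fderiv ℝ (fderiv ℝ G) p (YY lam H p) (YY lam F p) := hsG _ _
  have e3 : fderiv ℝ (fderiv ℝ H) p (YY lam G p) (YY lam F p)
      = fderiv ℝ (fderiv ℝ H) p (YY lam F p) (YY lam G p) := hsH _ _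
  linear_combination hk + e1 + e2 + e3

end Aux

theorem bracket0_bracket1_compatible (n : ℕ) (hn : 1 ≤ n) (lam : ℝ)
    (F G H : Mat n × Mat n → ℝ)
    (hF : ContDiff ℝ (⊤ : ℕ∞) F) (hG : ContDiff ℝ (⊤ : ℕ∞) G) (hH : ContDiff ℝ (⊤ : ℕ∞) H) :
    ∀ p : Mat n × Mat n,
      bracketPencil lam (bracketPencil lam F G) H p
        + bracketPencil lam (bracketPencil lam G H) F p
        + bracketPencil lam (bracketPencil lam H F) G p = 0 := by
  intro p
  exact jacobi lam hF hG hH p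
end

section
/- Let n ≥ 1 and for k ≥ 1 define H_k : Mat_n(ℝ) × Mat_n(ℝ) → ℝ by H_k(A,B) = (1/k) tr(A^k). Denote by (ξ_k, η_k) the gradient of H_k at (A,B). Then the functions H_k form a bi-Hamiltonian hierarchy: for every k ≥ 1 and every (A,B) ∈ Mat_n(ℝ) × Mat_n(ℝ), P₁(ξ_k, η_k) = P₀(ξ_{k+1}, η_{k+1}), where P₀(ξ,η) = (η, −ξ) and P₁(ξ,η) = (Aη, −ξA + [B,η]). -/
attribute [local instance] Matrix.frobeniusNormedAddCommGroup Matrix.frobeniusNormedSpace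

/-- H_k(A,B) = (1/k) tr(A^k). -/
noncomputable def Hfun (n k : ℕ) : Mat n × Mat n → ℝ :=
  fun p => (1 / (k : ℝ)) * Matrix.trace (p.1 ^ k)

/-! By cyclicity of the trace, the differential of `tr (A ^ k)` is `V ↦ k tr (A ^ (k - 1) V)`, so
the gradient of `H_k` is `(A ^ (k - 1), 0)`. Both sides of the hierarchy relation are then
`(0, -A ^ k)`. -/

attribute [local instance] Matrix.frobeniusNormedRing Matrix.frobeniusNormedAlgebra

open Matrix

theorem Matrix.trace_pow_mul_mul_pow {m R : Type*} [Fintype m] [DecidableEq m] [CommSemiring R]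
    (A V : Matrix m m R) (i j : ℕ) :
    trace (A ^ i * V * A ^ j) = trace (A ^ (i + j) * V) := by
  rw [trace_mul_cycle, ← pow_add, add_comm]

section TraceForm

variable {m 𝕜 : Type*} [Fintype m] [DecidableEq m] [RCLike 𝕜]

noncomputable def traceForm (ξ : Matrix m m 𝕜) : Matrix m m 𝕜 →L[𝕜] 𝕜 :=
  ((traceLinearMap m 𝕜 𝕜) ∘ₗ LinearMap.mulLeft 𝕜 ξ).toContinuousLinearMap

@[simp]
theorem traceForm_apply (ξ V : Matrix m m 𝕜) : traceForm ξ V = trace (ξ * V) := rfl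

noncomputable def tracePairing (ξ η : Matrix m m 𝕜) :
    Matrix m m 𝕜 × Matrix m m 𝕜 →L[𝕜] 𝕜 :=
  traceForm ξ ∘L ContinuousLinearMap.fst 𝕜 _ _
    + traceForm η ∘L ContinuousLinearMap.snd 𝕜 _ _

@[simp]
theorem tracePairing_apply (ξ η V W : Matrix m m 𝕜) :
    tracePairing ξ η (V, W) = trace (ξ * V) + trace (η * W) := rfl

theorem hasFDerivAt_trace_pow (k : ℕ) (A : Matrix m m 𝕜) :
    HasFDerivAt (fun X : Matrix m m 𝕜 => trace (X ^ k))
      ((k : 𝕜) • traceForm (A ^ (k - 1))) A := by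
  refine ((traceLinearMap m 𝕜 𝕜).toContinuousLinearMap.hasFDerivAt.comp A
    (hasFDerivAt_pow' (𝕜 := 𝕜) k)).congr_fderiv ?_
  ext1 V
  -- the composite mixes Frobenius and default matrix instances, which blocks the `apply` lemmas
  change trace ((∑ i ∈ Finset.range k,
    MulOpposite.op (A ^ i) • A ^ (k.pred - i) • ContinuousLinearMap.id 𝕜 (Matrix m m 𝕜)) V) = _
  rw [_root_.sum_apply]
  simp only [_root_.smul_apply, ContinuousLinearMap.id_apply, op_smul_eq_mul, smul_eq_mul,
    trace_sum, Nat.pred_eq_sub_one]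
  have hterm : ∀ i ∈ Finset.range k,
      trace (A ^ (k - 1 - i) * V * A ^ i) = trace (A ^ (k - 1) * V) := fun i hi => by
    rw [trace_pow_mul_mul_pow, Nat.sub_add_cancel (by grind)]
  rw [Finset.sum_congr rfl hterm, Finset.sum_const, Finset.card_range, nsmul_eq_mul]
  rfl

end TraceForm

section Gradient

variable {n : ℕ} {F : Mat n × Mat n → ℝ} {p : Mat n × Mat n} {ξ η : Mat n}

theorem gradA_eq_of_hasFDerivAt (h : HasFDerivAt F (tracePairing ξ η) p) : gradA F p = ξ := by
  ext i j
  simp [gradA, h.fderiv, trace_mul_single]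

theorem gradB_eq_of_hasFDerivAt (h : HasFDerivAt F (tracePairing ξ η) p) : gradB F p = η := by
  ext i j
  simp [gradB, h.fderiv, trace_mul_single]

end Gradient

theorem hasFDerivAt_Hfun {n k : ℕ} (hk : k ≠ 0) (A B : Mat n) :
    HasFDerivAt (Hfun n k) (tracePairing (A ^ (k - 1)) 0) (A, B) := by
  have hfst : HasFDerivAt (Prod.fst : Mat n × Mat n → Mat n)
      (ContinuousLinearMap.fst ℝ _ _) (A, B) :=
    hasFDerivAt_fst
  refine (((hasFDerivAt_trace_pow k A).comp (A, B) hfst).const_mul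
    (1 / (k : ℝ))).congr_fderiv ?_
  refine ContinuousLinearMap.ext fun ⟨V, W⟩ => ?_
  change 1 / (k : ℝ) * (k * trace (A ^ (k - 1) * V)) = trace (A ^ (k - 1) * V) + trace (0 * W)
  field_simp
  simp

theorem Hk_biHamiltonian_hierarchy_general (n : ℕ) (k : ℕ) (hk : 1 ≤ k)
    (A B : Mat n) :
    -- P₁ applied to grad H_k equals P₀ applied to grad H_{k+1}:
    (A * gradB (Hfun n k) (A, B),
      -(gradA (Hfun n k) (A, B) * A)
        + (B * gradB (Hfun n k) (A, B) - gradB (Hfun n k) (A, B) * B))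
    = (gradB (Hfun n (k + 1)) (A, B), -(gradA (Hfun n (k + 1)) (A, B))) := by
  have hk₀ : k ≠ 0 := Nat.one_le_iff_ne_zero.mp hk
  have hHk := hasFDerivAt_Hfun hk₀ A B
  have hHk₁ := hasFDerivAt_Hfun k.succ_ne_zero A B
  rw [gradA_eq_of_hasFDerivAt hHk, gradB_eq_of_hasFDerivAt hHk, gradA_eq_of_hasFDerivAt hHk₁,
    gradB_eq_of_hasFDerivAt hHk₁, pow_sub_one_mul hk₀]
  simp

theorem Hk_biHamiltonian_hierarchy (n : ℕ) (hn : 1 ≤ n) (k : ℕ) (hk : 1 ≤ k)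
    (A B : Mat n) :
    -- P₁ applied to grad H_k equals P₀ applied to grad H_{k+1}:
    (A * gradB (Hfun n k) (A, B),
      -(gradA (Hfun n k) (A, B) * A)
        + (B * gradB (Hfun n k) (A, B) - gradB (Hfun n k) (A, B) * B))
    = (gradB (Hfun n (k + 1)) (A, B), -(gradA (Hfun n (k + 1)) (A, B))) :=
  Hk_biHamiltonian_hierarchy_general n k hk A B
end

section
/- Necklace bracket formula for the first bracket: let n ≥ 1, let r, s ≥ 1, and let a₁,…,a_r and b₁,…,b_s be words in which each letter is one of the two symbols A, B. Define F₁(A,B) = tr(a₁⋯a_r) and F₂(A,B) = tr(b₁⋯b_s) by substituting the matrices A, B for the symbols. For each i let c_i = a_{i+1}⋯a_r a₁⋯a_{i−1} and for each j let d_j = b_{j+1}⋯b_s b₁⋯b_{j−1} (the products of the remaining letters in cyclic order, again with A, B substituted). Then {F₁,F₂}_0 = Σ_{(i,j): a_i = B, b_j = A} tr(c_i d_j) − Σ_{(i,j): a_i = A, b_j = B} tr(d_j c_i) identically on Mat_n(ℝ) × Mat_n(ℝ). -/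
/- STATEMENT 5: necklace bracket formula for the first bracket. For words
a₁⋯a_r and b₁⋯b_s in the two letters A, B (a letter is encoded as a `Bool`:
`true` stands for the symbol A and `false` for the symbol B), define
F₁(A,B) = tr(a₁⋯a_r), F₂(A,B) = tr(b₁⋯b_s); then
{F₁,F₂}_0 = Σ_{(i,j): a_i = B, b_j = A} tr(c_i d_j)
          − Σ_{(i,j): a_i = A, b_j = B} tr(d_j c_i),
where c_i = a_{i+1}⋯a_r a₁⋯a_{i−1} and d_j = b_{j+1}⋯b_s b₁⋯b_{j−1}. -/

attribute [local instance] Matrix.frobeniusNormedAddCommGroup Matrix.frobeniusNormedSpace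

/-- Substitute the matrices A, B for the symbols: `true` ↦ A, `false` ↦ B. -/
def subst {n : ℕ} (A B : Mat n) : Bool → Mat n := fun s => if s then A else B

/-- The (ordered) product of the word w with A, B substituted for the symbols. -/
def wordProd {n : ℕ} (A B : Mat n) (w : List Bool) : Mat n := (w.map (subst A B)).prod

/-- The word of the remaining letters in cyclic order after removing the letter
at (0-based) position i: a_{i+1}⋯a_r a₁⋯a_{i−1}. -/
def cyc (w : List Bool) (i : ℕ) : List Bool := w.drop (i + 1) ++ w.take i

/-- The trace function F(A,B) = tr(w₁⋯w_r) associated to a word w. -/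
def traceWord (n : ℕ) (w : List Bool) : Mat n × Mat n → ℝ :=
  fun p => Matrix.trace (wordProd p.1 p.2 w)

/-! By the Leibniz rule and cyclicity of the trace, the derivative of `tr(w₁⋯w_r)` in the
direction `(V, W)` is `Σᵢ tr(cᵢ · wᵢ(V, W))`. Hence `ξ_F = Σ_{wᵢ = A} cᵢ` and `η_F = Σ_{wᵢ = B} cᵢ`,
and expanding the products in `tr(η_F ξ_G − ξ_F η_G)` term by term gives the formula. -/

open Matrix

section

attribute [local instance] Matrix.frobeniusNormedRing Matrix.frobeniusNormedAlgebra

variable {n : ℕ}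

lemma fderiv_trace_apply {E : Type*} [NormedAddCommGroup E] [NormedSpace ℝ E]
    {f : E → Mat n} {x : E} (hf : DifferentiableAt ℝ f x) (v : E) :
    fderiv ℝ (fun y => trace (f y)) x v = trace (fderiv ℝ f x v) := by
  have ht : HasFDerivAt (fun y => trace (f y)) _ x :=
    (traceLinearMap (Fin n) ℝ ℝ).toContinuousLinearMap.hasFDerivAt.comp x hf.hasFDerivAt
  rw [ht.fderiv]
  rfl

lemma wordProd_cyc (A B : Mat n) (w : List Bool) (i : ℕ) :
    wordProd A B (cyc w i) = wordProd A B (w.drop (i + 1)) * wordProd A B (w.take i) := by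
  simp [wordProd, cyc]

lemma differentiable_subst (s : Bool) :
    Differentiable ℝ fun q : Mat n × Mat n => subst q.1 q.2 s := by
  cases s
  · exact differentiable_snd
  · exact differentiable_fst

lemma differentiable_wordProd (w : List Bool) :
    Differentiable ℝ fun q : Mat n × Mat n => wordProd q.1 q.2 w :=
  fun p =>
    (HasFDerivAt.list_prod' fun s _ => (differentiable_subst s p).hasFDerivAt).differentiableAt

lemma fderiv_subst_apply (s : Bool) (p : Mat n × Mat n) (V W : Mat n) :
    fderiv ℝ (fun q : Mat n × Mat n => subst q.1 q.2 s) p (V, W) = subst V W s := by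
  cases s
  · exact congrArg (· (V, W)) (fderiv_snd (𝕜 := ℝ) (p := p))
  · exact congrArg (· (V, W)) (fderiv_fst (𝕜 := ℝ) (p := p))

lemma fderiv_wordProd_apply (w : List Bool) (p : Mat n × Mat n) (V W : Mat n) :
    fderiv ℝ (fun q : Mat n × Mat n => wordProd q.1 q.2 w) p (V, W) =
      ∑ i : Fin w.length,
        wordProd p.1 p.2 (w.take i) * subst V W w[i] * wordProd p.1 p.2 (w.drop (i + 1)) := by
  refine (congrArg (· (V, W))
    (fderiv_list_prod' fun s _ => (differentiable_subst s).differentiableAt)).trans ?_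
  simp only [_root_.sum_apply, _root_.smul_apply]
  refine Finset.sum_congr rfl fun i _ => ?_
  -- `fderiv_list_prod'` puts the Frobenius-norm topology on `Mat n`, our statements the product
  -- topology; the two agree only up to unfolding, hence `erw` (also below)
  erw [fderiv_subst_apply]
  simp only [smul_eq_mul, MulOpposite.smul_eq_mul_unop, MulOpposite.unop_op, mul_assoc, wordProd]

lemma fderiv_traceWord_apply (w : List Bool) (p : Mat n × Mat n) (V W : Mat n) :
    fderiv ℝ (traceWord n w) p (V, W) =
      ∑ i : Fin w.length, trace (wordProd p.1 p.2 (cyc w i) * subst V W w[i]) := by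
  refine (fderiv_trace_apply (differentiable_wordProd w p) (V, W)).trans ?_
  erw [fderiv_wordProd_apply, trace_sum]
  refine Finset.sum_congr rfl fun i _ => ?_
  rw [wordProd_cyc, trace_mul_cycle]

lemma gradA_eq_of_fderiv {F : Mat n × Mat n → ℝ} {p : Mat n × Mat n} {X : Mat n}
    (h : ∀ V, fderiv ℝ F p (V, 0) = trace (X * V)) : gradA F p = X := by
  ext i j
  simp [gradA, h, trace_mul_single]

lemma gradB_eq_of_fderiv {F : Mat n × Mat n → ℝ} {p : Mat n × Mat n} {X : Mat n}
    (h : ∀ W, fderiv ℝ F p (0, W) = trace (X * W)) : gradB F p = X := by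
  ext i j
  simp [gradB, h, trace_mul_single]

lemma gradA_traceWord (w : List Bool) (p : Mat n × Mat n) :
    gradA (traceWord n w) p =
      ∑ i : Fin w.length, if w[i] then wordProd p.1 p.2 (cyc w i) else 0 := by
  refine gradA_eq_of_fderiv fun V => ?_
  rw [fderiv_traceWord_apply, Finset.sum_mul, trace_sum]
  refine Finset.sum_congr rfl fun i _ => ?_
  cases w[i] <;> simp [subst]

lemma gradB_traceWord (w : List Bool) (p : Mat n × Mat n) :
    gradB (traceWord n w) p =
      ∑ i : Fin w.length, if w[i] then 0 else wordProd p.1 p.2 (cyc w i) := by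
  refine gradB_eq_of_fderiv fun W => ?_
  rw [fderiv_traceWord_apply, Finset.sum_mul, trace_sum]
  refine Finset.sum_congr rfl fun i _ => ?_
  cases w[i] <;> simp [subst]

end

theorem necklace_formula_bracket0_general (n : ℕ)
    (a b : List Bool) (A B : Mat n) :
    bracket0 (traceWord n a) (traceWord n b) (A, B) =
      (∑ i : Fin a.length, ∑ j : Fin b.length,
        if a.get i = false ∧ b.get j = true then
          Matrix.trace (wordProd A B (cyc a i) * wordProd A B (cyc b j)) else 0)
      - (∑ i : Fin a.length, ∑ j : Fin b.length,
        if a.get i = true ∧ b.get j = false then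
          Matrix.trace (wordProd A B (cyc b j) * wordProd A B (cyc a i)) else 0) := by
  rw [bracket0, trace_sub, gradB_traceWord, gradA_traceWord, gradA_traceWord, gradB_traceWord,
    Finset.sum_mul_sum, Finset.sum_mul_sum, trace_sum, trace_sum]
  simp only [List.get_eq_getElem, Fin.getElem_fin]
  congr 1
  all_goals
    refine Finset.sum_congr rfl fun i _ => ?_
    rw [trace_sum]
    refine Finset.sum_congr rfl fun j _ => ?_
    rcases Bool.eq_false_or_eq_true a[(i : ℕ)] with ha | ha <;>
      rcases Bool.eq_false_or_eq_true b[(j : ℕ)] with hb | hb <;>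
      simp [ha, hb, trace_mul_comm (wordProd A B (cyc a i))]

theorem necklace_formula_bracket0 (n : ℕ) (hn : 1 ≤ n)
    (a b : List Bool) (ha : 1 ≤ a.length) (hb : 1 ≤ b.length) (A B : Mat n) :
    bracket0 (traceWord n a) (traceWord n b) (A, B) =
      (∑ i : Fin a.length, ∑ j : Fin b.length,
        if a.get i = false ∧ b.get j = true then
          Matrix.trace (wordProd A B (cyc a i) * wordProd A B (cyc b j)) else 0)
      - (∑ i : Fin a.length, ∑ j : Fin b.length,
        if a.get i = true ∧ b.get j = false then
          Matrix.trace (wordProd A B (cyc b j) * wordProd A B (cyc a i)) else 0) :=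
  necklace_formula_bracket0_general n a b A B
end

section
/- Normal form under simultaneous conjugation: let n ≥ 2, let b₁ < b₂ < … < b_n be real numbers, B = diag(b₁,…,b_n), and let A ∈ Mat_n(ℝ) satisfy A_{ij} ≠ 0 for all i ≠ j. Then there exists an invertible diagonal matrix g ∈ GL(n,ℝ) such that A' = gAg⁻¹ satisfies A'_{i+1,i} > 0 and A'_{i,i+1} = ε_i A'_{i+1,i} for all i = 1,…,n−1, where ε_i = +1 if A_{i,i+1} A_{i+1,i} > 0 and ε_i = −1 if A_{i,i+1} A_{i+1,i} < 0. Moreover the resulting matrix A' is unique: if g, g' are two invertible diagonal matrices such that both gAg⁻¹ and g'Ag'⁻¹ satisfy these conditions, then gAg⁻¹ = g'Ag'⁻¹. -/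
/-- Conjugation by the invertible diagonal matrix g = diag(d):  g A g⁻¹. -/
noncomputable def dconj {n : ℕ} (d : Fin n → ℝ) (A : Mat n) : Mat n :=
  Matrix.diagonal d * A * Matrix.diagonal (fun i => (d i)⁻¹)

/-- The normal-form conditions for A' relative to A:  A'_{i+1,i} > 0 and
A'_{i,i+1} = ε_i A'_{i+1,i}, with ε_i = +1 if A_{i,i+1}A_{i+1,i} > 0 and
ε_i = −1 otherwise (indices 0-based: i ranges over 0,…,n−2). -/
def IsNormalForm {n : ℕ} (A A' : Mat n) : Prop :=
  ∀ i : ℕ, (h : i + 1 < n) →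
    0 < A' ⟨i + 1, h⟩ ⟨i, by omega⟩ ∧
    A' ⟨i, by omega⟩ ⟨i + 1, h⟩ =
      (if 0 < A ⟨i, by omega⟩ ⟨i + 1, h⟩ * A ⟨i + 1, h⟩ ⟨i, by omega⟩
        then (1 : ℝ) else -1) * A' ⟨i + 1, h⟩ ⟨i, by omega⟩

/-! Conjugating by `diag d` multiplies `A_{i+1,i}` by the ratio `r = d_{i+1}/d_i` and divides
`A_{i,i+1}` by it, so the product `A_{i,i+1} A_{i+1,i}` is invariant. Hence the normal-form
condition at `i` says exactly that `r A_{i+1,i} = √|A_{i,i+1} A_{i+1,i}|`, which fixes every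
consecutive ratio of `d`: this gives existence (choose the ratios), and uniqueness because `d` is
then determined up to a common scalar factor, which conjugation does not see. -/

lemma pos_and_div_eq_ite_mul_iff {p q : ℝ} (hpq : p * q ≠ 0) (r : ℝ) :
    (0 < r * q ∧ p / r = (if 0 < p * q then (1 : ℝ) else -1) * (r * q)) ↔
      r * q = √|p * q| := by
  set s : ℝ := if 0 < p * q then 1 else -1
  have hs : s * |p * q| = p * q := by
    by_cases h : 0 < p * q
    · simp [s, h, abs_of_pos h]
    · simp [s, h, abs_of_nonpos (not_lt.1 h)]
  have hs2 : s * s = 1 := by by_cases h : 0 < p * q <;> simp [s, h]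
  constructor
  · rintro ⟨hpos, hdiv⟩
    have hr : r ≠ 0 := by rintro rfl; simp at hpos
    have hp : p = s * (r * q) * r := (div_eq_iff hr).1 hdiv
    have hsq : |p * q| = (r * q) ^ 2 := by
      linear_combination ((r * q) ^ 2 - |p * q|) * hs2 + s * hs + s * q * hp
    rw [hsq, Real.sqrt_sq hpos.le]
  · intro h
    have hpos : 0 < r * q := h ▸ Real.sqrt_pos.2 (abs_pos.2 hpq)
    have hsq : (r * q) ^ 2 = |p * q| := h ▸ Real.sq_sqrt (abs_nonneg _)
    have hr : r ≠ 0 := by rintro rfl; simp at hpos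
    refine ⟨hpos, (div_eq_iff hr).2 <| mul_right_cancel₀ (right_ne_zero_of_mul hpq) ?_⟩
    linear_combination -hs - s * hsq

lemma Fin.apply_eq_apply_of_forall_succ {α : Type*} {n : ℕ} {f : Fin n → α}
    (hf : ∀ i (h : i + 1 < n), f ⟨i + 1, h⟩ = f ⟨i, by omega⟩) (i j : Fin n) : f i = f j := by
  suffices h : ∀ k (hk : k < n), f ⟨k, hk⟩ = f ⟨0, i.pos⟩ by
    rw [← Fin.eta i i.2, ← Fin.eta j j.2, h i i.2, h j j.2]
  intro k
  induction k with
  | zero => intro _; rfl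
  | succ k ih => intro hk; rw [hf k hk, ih]

section

variable {n : ℕ} (A : Mat n)

lemma dconj_apply (d : Fin n → ℝ) (i j : Fin n) : dconj d A i j = d i * A i j / d j := by
  simp [dconj, Matrix.diagonal_mul, Matrix.mul_diagonal, div_eq_mul_inv]

lemma dconj_eq_dconj_of_forall_div_eq {d d' : Fin n → ℝ} (hd : ∀ i, d i ≠ 0)
    (hd' : ∀ i, d' i ≠ 0) (h : ∀ i j, d' i / d i = d' j / d j) : dconj d A = dconj d' A := by
  ext i j
  have hij := h i j
  rw [dconj_apply, dconj_apply]
  field_simp [hd i, hd j, hd' i, hd' j] at hij ⊢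
  linear_combination -A i j * hij

variable {A}
variable
  (hA : ∀ i (h : i + 1 < n), A ⟨i, by omega⟩ ⟨i + 1, h⟩ * A ⟨i + 1, h⟩ ⟨i, by omega⟩ ≠ 0)
include hA

lemma isNormalForm_dconj_iff (d : Fin n → ℝ) :
    IsNormalForm A (dconj d A) ↔ ∀ i (h : i + 1 < n),
      d ⟨i + 1, h⟩ / d ⟨i, by omega⟩ * A ⟨i + 1, h⟩ ⟨i, by omega⟩ =
        √|A ⟨i, by omega⟩ ⟨i + 1, h⟩ * A ⟨i + 1, h⟩ ⟨i, by omega⟩| := by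
  refine forall_congr' fun i => forall_congr' fun h => ?_
  rw [← pos_and_div_eq_ite_mul_iff (hA i h), dconj_apply, dconj_apply, div_div_eq_mul_div]
  ring_nf

lemma exists_isNormalForm_dconj :
    ∃ d : Fin n → ℝ, (∀ i, d i ≠ 0) ∧ IsNormalForm A (dconj d A) := by
  let ratio (i : ℕ) : ℝ := if h : i + 1 < n then
      √|A ⟨i, by omega⟩ ⟨i + 1, h⟩ * A ⟨i + 1, h⟩ ⟨i, by omega⟩| / A ⟨i + 1, h⟩ ⟨i, by omega⟩
    else 1
  have hratio (i : ℕ) : ratio i ≠ 0 := by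
    unfold ratio
    split_ifs with h
    · exact div_ne_zero (Real.sqrt_ne_zero'.2 (abs_pos.2 (hA i h)))
        (right_ne_zero_of_mul (hA i h))
    · exact one_ne_zero
  have hprod (k : ℕ) : ∏ i ∈ Finset.range k, ratio i ≠ 0 :=
    Finset.prod_ne_zero_iff.2 fun i _ => hratio i
  refine ⟨fun k => ∏ i ∈ Finset.range k, ratio i, fun k => hprod k, ?_⟩
  refine (isNormalForm_dconj_iff hA _).2 fun i h => ?_
  change (∏ j ∈ Finset.range (i + 1), ratio j) / (∏ j ∈ Finset.range i, ratio j) * _ = _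
  rw [Finset.prod_range_succ, mul_div_cancel_left₀ _ (hprod i)]
  simp only [ratio, dif_pos h]
  exact div_mul_cancel₀ _ (right_ne_zero_of_mul (hA i h))

lemma dconj_eq_dconj_of_isNormalForm {d d' : Fin n → ℝ} (hd : ∀ i, d i ≠ 0)
    (hd' : ∀ i, d' i ≠ 0) (hnf : IsNormalForm A (dconj d A))
    (hnf' : IsNormalForm A (dconj d' A)) :
    dconj d A = dconj d' A := by
  rw [isNormalForm_dconj_iff hA] at hnf hnf'
  refine dconj_eq_dconj_of_forall_div_eq A hd hd' <|
    Fin.apply_eq_apply_of_forall_succ fun i h => ?_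
  have hratio :=
    mul_right_cancel₀ (right_ne_zero_of_mul (hA i h)) ((hnf i h).trans (hnf' i h).symm)
  field_simp [hd ⟨i, by omega⟩, hd ⟨i + 1, h⟩, hd' ⟨i, by omega⟩, hd' ⟨i + 1, h⟩] at hratio ⊢
  linear_combination -hratio

end

theorem normal_form_under_diagonal_conjugation_general (n : ℕ)
    (A : Mat n) (hA : ∀ i j : Fin n, i ≠ j → A i j ≠ 0) :
    (∃ d : Fin n → ℝ, (∀ i, d i ≠ 0) ∧ IsNormalForm A (dconj d A)) ∧
    (∀ d d' : Fin n → ℝ, (∀ i, d i ≠ 0) → (∀ i, d' i ≠ 0) →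
      IsNormalForm A (dconj d A) → IsNormalForm A (dconj d' A) →
      dconj d A = dconj d' A) := by
  have hadj :
      ∀ i (h : i + 1 < n), A ⟨i, by omega⟩ ⟨i + 1, h⟩ * A ⟨i + 1, h⟩ ⟨i, by omega⟩ ≠ 0 :=
    fun i h => mul_ne_zero (hA _ _ (by simp [Fin.ext_iff])) (hA _ _ (by simp [Fin.ext_iff]))
  exact ⟨exists_isNormalForm_dconj hadj, fun _ _ => dconj_eq_dconj_of_isNormalForm hadj⟩

theorem normal_form_under_diagonal_conjugation (n : ℕ) (hn : 2 ≤ n)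
    (b : Fin n → ℝ) (hb : StrictMono b) (B : Mat n) (hB : B = Matrix.diagonal b)
    (A : Mat n) (hA : ∀ i j : Fin n, i ≠ j → A i j ≠ 0) :
    (∃ d : Fin n → ℝ, (∀ i, d i ≠ 0) ∧ IsNormalForm A (dconj d A)) ∧
    (∀ d d' : Fin n → ℝ, (∀ i, d i ≠ 0) → (∀ i, d' i ≠ 0) →
      IsNormalForm A (dconj d A) → IsNormalForm A (dconj d' A) →
      dconj d A = dconj d' A) :=
  normal_form_under_diagonal_conjugation_general n A hA
end

section
/- Tangent-space decomposition at points of the transversal slice: let n ≥ 2, let ε ∈ {+1,−1}^{n−1}, and let (A,B) ∈ Mat_n(ℝ) × Mat_n(ℝ) with B diagonal with strictly increasing diagonal entries B_{11} < … < B_{nn}, A_{i+1,i} > 0 and A_{i,i+1} = ε_i A_{i+1,i} for all i = 1,…,n−1. Then every pair (V,W) ∈ Mat_n(ℝ) × Mat_n(ℝ) can be written as V = Ȧ + [A,ξ], W = Ḃ + [B,ξ] where Ḃ is diagonal, Ȧ satisfies Ȧ_{i,i+1} = ε_i Ȧ_{i+1,i} for all i = 1,…,n−1, and ξ ∈ Mat_n(ℝ);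 moreover Ȧ and Ḃ are uniquely determined by (V,W), and ξ is unique up to adding a real multiple of the identity matrix. -/
/-- i-th index, as an element of Fin n, for i : Fin (n-1). -/
def lo {n : ℕ} (i : Fin (n - 1)) : Fin n := ⟨i.val, by have := i.isLt; omega⟩

/-- (i+1)-st index, as an element of Fin n, for i : Fin (n-1). -/
def hi {n : ℕ} (i : Fin (n - 1)) : Fin n := ⟨i.val + 1, by have := i.isLt; omega⟩

theorem tangent_space_decomposition (n : ℕ) (hn : 2 ≤ n)
    (eps : Fin (n - 1) → ℝ) (heps : ∀ i, eps i = 1 ∨ eps i = -1)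
    (b : Fin n → ℝ) (hb : StrictMono b) (B : Mat n) (hB : B = Matrix.diagonal b)
    (A : Mat n)
    (hA : ∀ i : Fin (n - 1), 0 < A (hi i) (lo i) ∧ A (lo i) (hi i) = eps i * A (hi i) (lo i))
    (V W : Mat n) :
    ∃ Adot Bdot xi : Mat n,
      (∀ i j : Fin n, i ≠ j → Bdot i j = 0) ∧
      (∀ i : Fin (n - 1), Adot (lo i) (hi i) = eps i * Adot (hi i) (lo i)) ∧
      V = Adot + (A * xi - xi * A) ∧ W = Bdot + (B * xi - xi * B) ∧
      (∀ Adot' Bdot' xi' : Mat n,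
        (∀ i j : Fin n, i ≠ j → Bdot' i j = 0) →
        (∀ i : Fin (n - 1), Adot' (lo i) (hi i) = eps i * Adot' (hi i) (lo i)) →
        V = Adot' + (A * xi' - xi' * A) → W = Bdot' + (B * xi' - xi' * B) →
        Adot' = Adot ∧ Bdot' = Bdot ∧ ∃ c : ℝ, xi' = xi + c • (1 : Mat n)) := by
  classical
  subst hB
  have hbne : ∀ i j : Fin n, i ≠ j → b i - b j ≠ 0 := fun i j h =>
    sub_ne_zero.mpr fun e => h (hb.injective e)
  have hlh : ∀ i : Fin (n - 1), lo i ≠ hi i := fun i => by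
    simp [lo, hi, Fin.ext_iff]
  have heps0 : ∀ i, eps i ≠ 0 := fun i => by rcases heps i with h | h <;> simp [h]
  have ha : ∀ i, A (hi i) (lo i) ≠ 0 := fun i => (hA i).1.ne'
  set xi0 : Mat n := Matrix.of (fun i j => if i = j then 0 else W i j / (b i - b j)) with hxi0
  set M : Mat n := V - (A * xi0 - xi0 * A) with hM
  set r : ℕ → ℝ := fun k => if h : k < n - 1 then
      (M (lo ⟨k, h⟩) (hi ⟨k, h⟩) - eps ⟨k, h⟩ * M (hi ⟨k, h⟩) (lo ⟨k, h⟩)) /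
        (2 * eps ⟨k, h⟩ * A (hi ⟨k, h⟩) (lo ⟨k, h⟩)) else 0 with hr
  set d : Fin n → ℝ := fun k => ∑ j ∈ Finset.range k.val, r j with hd
  set xi : Mat n := xi0 + Matrix.diagonal d with hxi
  set Adot : Mat n := V - (A * xi - xi * A) with hAdot
  set Bdot : Mat n := W - (Matrix.diagonal b * xi - xi * Matrix.diagonal b) with hBdot
  have hxiOff : ∀ i j : Fin n, i ≠ j → xi i j = W i j / (b i - b j) := by
    intro i j h
    simp [hxi, hxi0, Matrix.add_apply, Matrix.diagonal_apply_ne _ h, h]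
  -- Bdot off-diagonal vanishes
  have hBd0 : ∀ i j : Fin n, i ≠ j → Bdot i j = 0 := by
    intro i j h
    simp only [hBdot, Matrix.sub_apply, Matrix.diagonal_mul, Matrix.mul_diagonal]
    rw [hxiOff i j h]
    field_simp [hbne i j h]
    ring
  -- entrywise formula for Adot
  have hsplit : A * xi - xi * A =
      (A * xi0 - xi0 * A) + (A * Matrix.diagonal d - Matrix.diagonal d * A) := by
    rw [hxi]; noncomm_ring
  have hAdotApply : ∀ i j : Fin n, Adot i j = M i j - A i j * (d j - d i) := by
    intro i j
    rw [hAdot, hsplit, hM]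
    simp [Matrix.sub_apply, Matrix.add_apply, Matrix.mul_diagonal, Matrix.diagonal_mul]
    ring
  have hdr : ∀ i : Fin (n - 1), d (hi i) - d (lo i) = r i.val := by
    intro i
    simp [hd, hi, lo, Finset.sum_range_succ]
  have hrval : ∀ i : Fin (n - 1), r i.val =
      (M (lo i) (hi i) - eps i * M (hi i) (lo i)) /
        (2 * eps i * A (hi i) (lo i)) := by
    intro i
    simp [hr, i.isLt]
  have key : ∀ i : Fin (n - 1),
      2 * eps i * A (hi i) (lo i) * (d (hi i) - d (lo i)) =
        M (lo i) (hi i) - eps i * M (hi i) (lo i) := by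
    intro i
    rw [hdr, hrval]
    rw [← mul_div_assoc]
    exact mul_div_cancel_left₀ _ (mul_ne_zero (mul_ne_zero two_ne_zero (heps0 i)) (ha i))
  have hAsym : ∀ i : Fin (n - 1), Adot (lo i) (hi i) = eps i * Adot (hi i) (lo i) := by
    intro i
    rw [hAdotApply, hAdotApply, (hA i).2]
    linear_combination -key i
  have hV : V = Adot + (A * xi - xi * A) := by rw [hAdot]; abel
  have hW : W = Bdot + (Matrix.diagonal b * xi - xi * Matrix.diagonal b) := by
    rw [hBdot]; abel
  refine ⟨Adot, Bdot, xi, hBd0, hAsym, hV, hW, ?_⟩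
  intro Adot' Bdot' xi' hB'0 hA'sym hV' hW'
  -- off-diagonal entries of xi' are forced
  have hxiOff' : ∀ i j : Fin n, i ≠ j → xi' i j = xi i j := by
    intro i j h
    have e1 := congrFun (congrFun hW' i) j
    simp only [Matrix.add_apply, Matrix.sub_apply, Matrix.diagonal_mul, Matrix.mul_diagonal,
      hB'0 i j h] at e1
    rw [hxiOff i j h, eq_div_iff (hbne i j h)]
    linear_combination -e1
  -- Bdot' = Bdot
  have hBdEq : Bdot' = Bdot := by
    ext i j
    by_cases h : i = j
    · subst h
      have e1 := congrFun (congrFun hW' i) i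
      simp only [Matrix.add_apply, Matrix.sub_apply, Matrix.diagonal_mul,
        Matrix.mul_diagonal] at e1
      have e2 : Bdot i i = W i i := by
        simp only [hBdot, Matrix.sub_apply, Matrix.diagonal_mul, Matrix.mul_diagonal]
        ring
      rw [e2]; linear_combination -e1
    · rw [hB'0 i j h, hBd0 i j h]
  -- the difference xi' - xi is diagonal
  set e : Fin n → ℝ := fun k => xi' k k - xi k k with he
  have hdelta : xi' - xi = Matrix.diagonal e := by
    ext i j
    by_cases h : i = j
    · subst h; simp [he, Matrix.sub_apply]
    · simp [Matrix.sub_apply, Matrix.diagonal_apply_ne _ h, hxiOff' i j h]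
  have hAd' : ∀ i j : Fin n, Adot' i j = Adot i j - A i j * (e j - e i) := by
    intro i j
    have h1 : Adot + (A * xi - xi * A) = Adot' + (A * xi' - xi' * A) := hV.symm.trans hV'
    have h0 : Adot' = Adot + ((A * xi - xi * A) - (A * xi' - xi' * A)) := by
      calc Adot' = Adot' + (A * xi' - xi' * A) - (A * xi' - xi' * A) := by abel
        _ = Adot + (A * xi - xi * A) - (A * xi' - xi' * A) := by rw [← h1]
        _ = Adot + ((A * xi - xi * A) - (A * xi' - xi' * A)) := by abel
    have h2 : (A * xi - xi * A) - (A * xi' - xi' * A) =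
        Matrix.diagonal e * A - A * Matrix.diagonal e := by
      have : (A * xi - xi * A) - (A * xi' - xi' * A) =
          (xi' - xi) * A - A * (xi' - xi) := by noncomm_ring
      rw [this, hdelta]
    rw [h0, h2]
    simp [Matrix.add_apply, Matrix.sub_apply, Matrix.diagonal_mul, Matrix.mul_diagonal]
    ring
  have hestep : ∀ i : Fin (n - 1), e (hi i) = e (lo i) := by
    intro i
    have c1 := hA'sym i
    rw [hAd' (lo i) (hi i), hAd' (hi i) (lo i), (hA i).2] at c1
    have c2 := hAsym i
    have c3 : 2 * eps i * A (hi i) (lo i) * (e (hi i) - e (lo i)) = 0 := by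
      linear_combination c2 - c1
    have c4 : 2 * eps i * A (hi i) (lo i) ≠ 0 := by
      exact mul_ne_zero (mul_ne_zero two_ne_zero (heps0 i)) (ha i)
    have := (mul_eq_zero.mp c3).resolve_left c4
    linarith [sub_eq_zero.mp this]
  have hzlt : 0 < n := by omega
  have haux : ∀ m, ∀ hm : m < n, e ⟨m, hm⟩ = e ⟨0, hzlt⟩ := by
    intro m
    induction m with
    | zero => intro hm; rfl
    | succ m ih =>
      intro hm
      have hm' : m < n - 1 := by omega
      have hs := hestep ⟨m, hm'⟩
      have h1 : (hi (⟨m, hm'⟩ : Fin (n - 1)) : Fin n) = ⟨m + 1, hm⟩ := rfl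
      have h2 : (lo (⟨m, hm'⟩ : Fin (n - 1)) : Fin n) = ⟨m, by omega⟩ := rfl
      rw [h1, h2] at hs
      rw [hs]; exact ih _
  have hconst : ∀ k : Fin n, e k = e ⟨0, hzlt⟩ := fun k => by
    have := haux k.val k.isLt; simpa using this
  refine ⟨?_, hBdEq, e ⟨0, hzlt⟩, ?_⟩
  · ext i j
    rw [hAd' i j, hconst i, hconst j]
    ring
  · ext i j
    by_cases h : i = j
    · subst h
      have h1 := hconst i
      have h2 : e i = xi' i i - xi i i := rfl
      have h3 : e ⟨0, hzlt⟩ = xi' ⟨0, hzlt⟩ ⟨0, hzlt⟩ - xi ⟨0, hzlt⟩ ⟨0, hzlt⟩ := rfl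
      simp only [Matrix.add_apply, Matrix.smul_apply, Matrix.one_apply_eq, smul_eq_mul, mul_one]
      rw [h2, h3] at h1
      linarith
    · simp [Matrix.add_apply, Matrix.smul_apply, Matrix.one_apply_ne h, hxiOff' i j h]
end

section
/- Injectivity of the second projection: let n ≥ 1, let λ₁ < λ₂ < … < λ_n and λ'₁ < λ'₂ < … < λ'_n be real numbers, and let μ₁,…,μ_n and μ'₁,…,μ'_n be real numbers. Suppose that for every k = 1,…,n one has Σ_{l=1}^n λ_l^k = Σ_{l=1}^n (λ'_l)^k and Σ_{l=1}^n μ_l λ_l^{k−1} = Σ_{l=1}^n μ'_l (λ'_l)^{k−1}. Then λ_l = λ'_l and μ_l = μ'_l for all l = 1,…,n. -/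
/-!
By Newton's identities the power sums `∑ λ_l ^ k`, `k ≤ n`, determine the elementary symmetric
functions of the `λ_l`, hence the polynomial `∏ (X - λ_l)` and the multiset of its roots; listing
the roots increasingly gives `λ = λ'`. The second family of equations then says that `μ - μ'` is
killed by the transposed Vandermonde matrix of the distinct nodes `λ_l`, which is invertible.
-/

open Finset Polynomial

theorem Multiset.mul_esymm_map_eq_sum {σ R : Type*} [Fintype σ] [CommRing R] (x : σ → R)
    (k : ℕ) :
    k * (univ.val.map x).esymm k = (-1) ^ (k + 1) *
      ∑ a ∈ Finset.HasAntidiagonal.antidiagonal k with a.1 < k,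
        (-1) ^ a.1 * (univ.val.map x).esymm a.1 * ∑ i, x i ^ a.2 := by
  simpa only [map_mul, map_sum, map_pow, map_neg, map_one, map_natCast, MvPolynomial.aeval_X,
    MvPolynomial.aeval_esymm_eq_multiset_esymm, MvPolynomial.psum] using
    congrArg (MvPolynomial.aeval x) (MvPolynomial.mul_esymm_eq_sum σ R k)

theorem Multiset.esymm_map_eq_of_sum_pow_eq {σ R : Type*} [Fintype σ] [CommRing R]
    [NoZeroDivisors R] [CharZero R] {x y : σ → R}
    (h : ∀ k, 1 ≤ k → k ≤ Fintype.card σ → ∑ i, x i ^ k = ∑ i, y i ^ k) :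
    ∀ k ≤ Fintype.card σ, (univ.val.map x).esymm k = (univ.val.map y).esymm k := by
  intro k
  induction k using Nat.strong_induction_on with
  | _ k ih =>
    intro hk
    rcases Nat.eq_zero_or_pos k with rfl | hk0
    · simp [Multiset.esymm]
    refine mul_left_cancel₀ (Nat.cast_ne_zero.mpr hk0.ne' : (k : R) ≠ 0) ?_
    rw [Multiset.mul_esymm_map_eq_sum, Multiset.mul_esymm_map_eq_sum]
    congr 1
    refine Finset.sum_congr rfl fun a ha => ?_
    obtain ⟨hsum, hlt⟩ := Finset.mem_filter.mp ha
    rw [Finset.HasAntidiagonal.mem_antidiagonal] at hsum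
    rw [ih a.1 hlt (by omega), h a.2 (by omega) (by omega)]

theorem Multiset.eq_of_card_eq_of_esymm_eq {R : Type*} [CommRing R] [IsDomain R]
    {s t : Multiset R} (hcard : card s = card t) (h : ∀ k ≤ card s, s.esymm k = t.esymm k) :
    s = t := by
  have hprod : (s.map fun a => X - C a).prod = (t.map fun a => X - C a).prod := by
    rw [prod_X_sub_X_eq_sum_esymm, prod_X_sub_X_eq_sum_esymm, ← hcard]
    exact Finset.sum_congr rfl fun k hk => by rw [h k (Nat.lt_succ_iff.mp (mem_range.mp hk))]
  simpa using congrArg roots hprod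

theorem Multiset.map_univ_eq_of_sum_pow_eq {σ R : Type*} [Fintype σ] [CommRing R] [IsDomain R]
    [CharZero R] {x y : σ → R}
    (h : ∀ k, 1 ≤ k → k ≤ Fintype.card σ → ∑ i, x i ^ k = ∑ i, y i ^ k) :
    univ.val.map x = univ.val.map y :=
  Multiset.eq_of_card_eq_of_esymm_eq (by simp) fun k hk =>
    Multiset.esymm_map_eq_of_sum_pow_eq h k (by simpa using hk)

theorem StrictMono.eq_of_map_univ_eq {ι α : Type*} [Fintype ι] [LinearOrder ι] [Preorder α]
    {f g : ι → α} (hf : StrictMono f) (hg : StrictMono g)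
    (h : univ.val.map f = univ.val.map g) : f = g :=
  (hf.range_inj hg).mp <| Set.ext fun a => by simpa using congrArg (a ∈ ·) h

theorem eq_of_forall_sum_mul_pow_eq {R : Type*} [CommRing R] [IsDomain R] {n : ℕ}
    {x v w : Fin n → R} (hx : Function.Injective x)
    (h : ∀ i : Fin n, ∑ j, v j * x j ^ (i : ℕ) = ∑ j, w j * x j ^ (i : ℕ)) : v = w := by
  rw [← sub_eq_zero]
  refine Matrix.eq_zero_of_forall_pow_sum_mul_pow_eq_zero hx fun i => ?_
  simp only [Pi.sub_apply, sub_mul, sum_sub_distrib, h i, sub_self]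

theorem power_sums_injective_general (n : ℕ)
    (lam lam' mu mu' : Fin n → ℝ)
    (hlam : StrictMono lam) (hlam' : StrictMono lam')
    (hsum : ∀ k : ℕ, 1 ≤ k → k ≤ n →
      (∑ l, lam l ^ k = ∑ l, lam' l ^ k) ∧
      (∑ l, mu l * lam l ^ (k - 1) = ∑ l, mu' l * lam' l ^ (k - 1))) :
    lam = lam' ∧ mu = mu' := by
  have hlam_eq : lam = lam' := hlam.eq_of_map_univ_eq hlam' <|
    Multiset.map_univ_eq_of_sum_pow_eq fun k hk hkn => (hsum k hk (by simpa using hkn)).1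
  subst hlam_eq
  refine ⟨rfl, eq_of_forall_sum_mul_pow_eq hlam.injective fun i => ?_⟩
  simpa using (hsum (i + 1) (by omega) i.2).2

theorem power_sums_injective (n : ℕ) (hn : 1 ≤ n)
    (lam lam' mu mu' : Fin n → ℝ)
    (hlam : StrictMono lam) (hlam' : StrictMono lam')
    (hsum : ∀ k : ℕ, 1 ≤ k → k ≤ n →
      (∑ l, lam l ^ k = ∑ l, lam' l ^ k) ∧
      (∑ l, mu l * lam l ^ (k - 1) = ∑ l, mu' l * lam' l ^ (k - 1))) :
    lam = lam' ∧ mu = mu' :=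
  power_sums_injective_general n lam lam' mu mu' hlam hlam' hsum
end

section
/- Tangency of the Lax flows to the Calogero-Moser locus: let n ≥ 2 and k ≥ 1, let x₁ < x₂ < … < x_n be real numbers and y₁,…,y_n arbitrary real numbers. Let B = diag(x₁,…,x_n), let A ∈ Mat_n(ℝ) have entries A_{ii} = y_i and A_{ij} = 1/(x_i − x_j) for i ≠ j, and let μ ∈ Mat_n(ℝ) have entries μ_{ij} = 1 − δ_{ij}. Define ξ ∈ Mat_n(ℝ) by ξ_{ij} = (A^{k−1})_{ij}/(x_i − x_j) for i ≠ j and ξ_{ii} = −(1/2) Σ_{l ≠ i} (ξ_{il} + ξ_{li}). Then: (a) [ξ, μ] = 0; (b) [ξ,A]_{ij} = −[ξ,A]_{ji} for all i ≠ j; (c) [[ξ,B] + A^{k−1}, A] + [B, [ξ,A]] = 0. -/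
open Matrix

set_option maxHeartbeats 1000000 in
theorem lax_flows_tangent_to_CM_locus (n : ℕ) (hn : 2 ≤ n) (k : ℕ) (hk : 1 ≤ k)
    (x y : Fin n → ℝ) (hx : StrictMono x)
    (B : Mat n) (hB : B = Matrix.diagonal x)
    (A : Mat n) (hAdiag : ∀ i, A i i = y i)
    (hAoff : ∀ i j, i ≠ j → A i j = 1 / (x i - x j))
    (mu : Mat n) (hmu : ∀ i j, mu i j = if i = j then 0 else 1)
    (xi : Mat n)
    (hxioff : ∀ i j, i ≠ j → xi i j = (A ^ (k - 1)) i j / (x i - x j))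
    (hxidiag : ∀ i, xi i i = -(1 / 2) * ∑ l ∈ Finset.univ.erase i, (xi i l + xi l i)) :
    -- (a)
    xi * mu - mu * xi = 0 ∧
    -- (b)
    (∀ i j, i ≠ j → (xi * A - A * xi) i j = -((xi * A - A * xi) j i)) ∧
    -- (c)
    ((xi * B - B * xi + A ^ (k - 1)) * A - A * (xi * B - B * xi + A ^ (k - 1))
      + (B * (xi * A - A * xi) - (xi * A - A * xi) * B) = 0) := by
  set P : Mat n := A ^ (k - 1) with hPdef
  have hxne : ∀ {i j : Fin n}, i ≠ j → x i - x j ≠ 0 := fun h =>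
    sub_ne_zero.mpr (hx.injective.ne h)
  have hAanti : ∀ i j : Fin n, i ≠ j → A j i = -A i j := by
    intro i j h
    rw [hAoff _ _ h.symm, hAoff _ _ h]
    rw [show x j - x i = -(x i - x j) by ring, one_div, one_div, inv_neg]
  have hPA : P * A = A * P := ((Commute.refl A).pow_left (k - 1)).eq
  -- pairwise combinations
  have hpair : ∀ i l : Fin n, i ≠ l → xi i l + xi l i = A i l * (P i l - P l i) := by
    intro i l h
    rw [hxioff _ _ h, hxioff _ _ h.symm, hAoff _ _ h]
    field_simp [hxne h, hxne h.symm]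
    ring
  have hpair' : ∀ i l : Fin n, i ≠ l → xi i l - xi l i = A i l * (P i l + P l i) := by
    intro i l h
    rw [hxioff _ _ h, hxioff _ _ h.symm, hAoff _ _ h]
    field_simp [hxne h, hxne h.symm]
    ring
  -- key: for each i, ∑_{l≠i} (ξ_il - ξ_li) = 0
  have hkey : ∀ i : Fin n, ∑ l ∈ Finset.univ.erase i, (xi i l - xi l i) = 0 := by
    intro i
    have hc : ∀ l ∈ Finset.univ.erase i,
        xi i l - xi l i = A i l * P l i - P i l * A l i := by
      intro l hl
      have hil : i ≠ l := fun h => (Finset.mem_erase.mp hl).1 h.symm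
      rw [hpair' i l hil, hAanti i l hil]
      ring
    rw [Finset.sum_congr rfl hc, Finset.sum_sub_distrib]
    have e1 : ∑ l ∈ Finset.univ.erase i, A i l * P l i = (A * P) i i - A i i * P i i := by
      rw [Matrix.mul_apply]
      exact Finset.sum_erase_eq_sub (Finset.mem_univ i)
    have e2 : ∑ l ∈ Finset.univ.erase i, P i l * A l i = (P * A) i i - P i i * A i i := by
      rw [Matrix.mul_apply]
      exact Finset.sum_erase_eq_sub (Finset.mem_univ i)
    rw [e1, e2, hPA]
    ring
  -- row and column sums of xi vanish
  have hrow : ∀ i : Fin n, ∑ l, xi i l = 0 := by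
    intro i
    have h1 := (Finset.add_sum_erase Finset.univ (fun l => xi i l) (Finset.mem_univ i)).symm
    have h2 := hkey i
    rw [Finset.sum_sub_distrib] at h2
    have h3 := hxidiag i
    rw [Finset.sum_add_distrib] at h3
    rw [h1, h3]
    linarith
  have hcol : ∀ j : Fin n, ∑ l, xi l j = 0 := by
    intro j
    have h1 := (Finset.add_sum_erase Finset.univ (fun l => xi l j) (Finset.mem_univ j)).symm
    have h2 := hkey j
    rw [Finset.sum_sub_distrib] at h2
    have h3 := hxidiag j
    rw [Finset.sum_add_distrib] at h3
    rw [h1, h3]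
    linarith
  -- part (a)
  have ha : xi * mu - mu * xi = 0 := by
    ext i j
    simp only [Matrix.sub_apply, Matrix.mul_apply, Matrix.zero_apply, hmu]
    have e1 : ∑ l, xi i l * (if l = j then (0:ℝ) else 1)
        = ∑ l, xi i l - xi i j := by
      have : ∀ l ∈ Finset.univ, xi i l * (if l = j then (0:ℝ) else 1)
          = xi i l - (if l = j then xi i l else 0) := by
        intro l _
        by_cases h : l = j <;> simp [h]
      rw [Finset.sum_congr rfl this, Finset.sum_sub_distrib, Finset.sum_ite_eq']
      simp
    have e2 : ∑ l, (if i = l then (0:ℝ) else 1) * xi l j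
        = ∑ l, xi l j - xi i j := by
      have : ∀ l ∈ Finset.univ, (if i = l then (0:ℝ) else 1) * xi l j
          = xi l j - (if l = i then xi l j else 0) := by
        intro l _
        by_cases h : i = l
        · subst h; simp
        · simp [h, (Ne.symm h : l ≠ i)]
      rw [Finset.sum_congr rfl this, Finset.sum_sub_distrib, Finset.sum_ite_eq']
      simp
    rw [e1, e2, hrow, hcol]
    ring
  -- symmetrization facts
  have hsym : A + Aᵀ = Matrix.diagonal (fun i => 2 * y i) := by
    ext i j
    by_cases h : i = j
    · subst h
      simp [Matrix.transpose_apply, hAdiag, two_mul]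
    · simp only [Matrix.add_apply, Matrix.transpose_apply, Matrix.diagonal_apply_ne _ h,
        hAoff _ _ h, hAoff _ _ (Ne.symm h)]
      rw [div_add_div _ _ (hxne h) (hxne (Ne.symm h)), div_eq_zero_iff]
      left; ring
  have hPTAT : Pᵀ * Aᵀ = Aᵀ * Pᵀ := by
    rw [← Matrix.transpose_mul, ← Matrix.transpose_mul, hPA]
  have hPtA : Pᵀ * A - A * Pᵀ
      = Pᵀ * Matrix.diagonal (fun i => 2 * y i) - Matrix.diagonal (fun i => 2 * y i) * Pᵀ := by
    have e : Pᵀ * A - A * Pᵀ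
        = Pᵀ * (A + Aᵀ) - (A + Aᵀ) * Pᵀ - (Pᵀ * Aᵀ - Aᵀ * Pᵀ) := by noncomm_ring
    rw [e, hsym, hPTAT, sub_self, sub_zero]
  have hQA : (P - Pᵀ) * A - A * (P - Pᵀ)
      = Matrix.diagonal (fun i => 2 * y i) * Pᵀ - Pᵀ * Matrix.diagonal (fun i => 2 * y i) := by
    have e : (P - Pᵀ) * A - A * (P - Pᵀ)
        = (P * A - A * P) - (Pᵀ * A - A * Pᵀ) := by noncomm_ring
    rw [e, hPA, sub_self, hPtA]
    abel
  have hQAij : ∀ i j : Fin n, ((P - Pᵀ) * A) i j - (A * (P - Pᵀ)) i j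
      = 2 * y i * P j i - P j i * (2 * y j) := by
    intro i j
    have := congrFun (congrFun hQA i) j
    simpa [Matrix.sub_apply, Matrix.diagonal_mul, Matrix.mul_diagonal,
      Matrix.transpose_apply] using this
  -- part (b)
  have hb : ∀ i j : Fin n, i ≠ j → (xi * A - A * xi) i j = -((xi * A - A * xi) j i) := by
    intro i j hij
    have hji : j ≠ i := hij.symm
    set s : Finset (Fin n) := (Finset.univ.erase i).erase j with hs
    have hjmem : j ∈ Finset.univ.erase i := Finset.mem_erase.mpr ⟨hji, Finset.mem_univ j⟩
    set F : Fin n → ℝ := fun l =>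
      xi i l * A l j - A i l * xi l j + (xi j l * A l i - A j l * xi l i) with hF
    have key : ∑ l, F l = 0 := by
      have hsplit : ∑ l, F l = F i + (F j + ∑ l ∈ s, F l) := by
        rw [Finset.add_sum_erase _ F hjmem, Finset.add_sum_erase _ F (Finset.mem_univ i)]
      -- pointwise identity on s
      have hFp : ∀ l ∈ s, F l =
          A i j * (A i l * (P i l - P l i)) - A i j * (A l j * (P l j - P j l))
          + (A i j * ((P i l - P l i) * A l j) - A i j * (A i l * (P l j - P j l))) := by
        intro l hls
        have hlj : l ≠ j := (Finset.mem_erase.mp hls).1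
        have hli : l ≠ i := (Finset.mem_erase.mp (Finset.mem_erase.mp hls).2).1
        have hil : i ≠ l := hli.symm
        have hjl : j ≠ l := hlj.symm
        simp only [hF]
        rw [hxioff _ _ hil, hxioff _ _ hlj, hxioff _ _ hjl, hxioff _ _ hli,
          hAoff _ _ hil, hAoff _ _ hlj, hAoff _ _ hjl, hAoff _ _ hli, hAoff _ _ hij]
        field_simp [hxne hij, hxne hji, hxne hil, hxne hli, hxne hlj, hxne hjl]
        ring
      have hFs : ∑ l ∈ s, F l =
          A i j * (∑ l ∈ s, A i l * (P i l - P l i))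
          - A i j * (∑ l ∈ s, A l j * (P l j - P j l))
          + (A i j * (∑ l ∈ s, (P i l - P l i) * A l j)
            - A i j * (∑ l ∈ s, A i l * (P l j - P j l))) := by
        rw [Finset.sum_congr rfl hFp, Finset.sum_add_distrib, Finset.sum_sub_distrib,
          Finset.sum_sub_distrib, ← Finset.mul_sum, ← Finset.mul_sum, ← Finset.mul_sum,
          ← Finset.mul_sum]
      -- diagonal entries of xi via sums over s
      have hii : xi i i = -(1/2) * (A i j * (P i j - P j i)
          + ∑ l ∈ s, A i l * (P i l - P l i)) := by
        rw [hxidiag i, ← Finset.add_sum_erase _ _ hjmem]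
        congr 1
        rw [hpair i j hij]
        refine congrArg _ ?_
        refine Finset.sum_congr rfl ?_
        intro l hl
        have hil : i ≠ l :=
          fun h => (Finset.mem_erase.mp (Finset.mem_erase.mp hl).2).1 h.symm
        exact hpair i l hil
      have himem : i ∈ Finset.univ.erase j := Finset.mem_erase.mpr ⟨hij, Finset.mem_univ i⟩
      have hjj : xi j j = -(1/2) * (A i j * (P i j - P j i)
          + ∑ l ∈ s, A l j * (P l j - P j l)) := by
        have e0 : xi j i + xi i j = A i j * (P i j - P j i) := by
          rw [hpair j i hji, hAanti i j hij]; ring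
        have ec : ∀ l ∈ s, xi j l + xi l j = A l j * (P l j - P j l) := by
          intro l hl
          have hlj : l ≠ j := (Finset.mem_erase.mp hl).1
          rw [hpair j l hlj.symm, hAanti l j hlj]
          ring
        rw [hxidiag j, ← Finset.add_sum_erase _ _ himem, Finset.erase_right_comm, ← hs,
          e0, Finset.sum_congr rfl ec]
      -- sums over s expressed via matrix products
      have E3 : ∑ l ∈ s, (P i l - P l i) * A l j
          = ((P - Pᵀ) * A) i j - (P i j - P j i) * y j := by
        have hfull : ((P - Pᵀ) * A) i j = ∑ l, (P i l - P l i) * A l j := by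
          rw [Matrix.mul_apply]
          exact Finset.sum_congr rfl fun l _ => by
            simp [Matrix.sub_apply, Matrix.transpose_apply]
        have : ∑ l, (P i l - P l i) * A l j
            = (P i i - P i i) * A i j + ((P i j - P j i) * A j j + ∑ l ∈ s, (P i l - P l i) * A l j) := by
          rw [Finset.add_sum_erase _ (fun l => (P i l - P l i) * A l j) hjmem,
            Finset.add_sum_erase _ (fun l => (P i l - P l i) * A l j) (Finset.mem_univ i)]
        rw [hfull, this, hAdiag j]
        ring
      have E4 : ∑ l ∈ s, A i l * (P l j - P j l)
          = (A * (P - Pᵀ)) i j - y i * (P i j - P j i) := by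
        have hfull : (A * (P - Pᵀ)) i j = ∑ l, A i l * (P l j - P j l) := by
          rw [Matrix.mul_apply]
          exact Finset.sum_congr rfl fun l _ => by
            simp [Matrix.sub_apply, Matrix.transpose_apply]
        have : ∑ l, A i l * (P l j - P j l)
            = A i i * (P i j - P j i) + (A i j * (P j j - P j j) + ∑ l ∈ s, A i l * (P l j - P j l)) := by
          rw [Finset.add_sum_erase _ (fun l => A i l * (P l j - P j l)) hjmem,
            Finset.add_sum_erase _ (fun l => A i l * (P l j - P j l)) (Finset.mem_univ i)]
        rw [hfull, this, hAdiag i]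
        ring
      -- boundary terms
      have hFi : F i = 2 * A i j * xi i i + y i * (xi j i - xi i j) := by
        simp only [hF]
        rw [hAdiag i, hAanti i j hij]
        ring
      have hFj : F j = -(2 * A i j * xi j j) + y j * (xi i j - xi j i) := by
        simp only [hF]
        rw [hAdiag j, hAanti i j hij]
        ring
      have hpij : xi i j - xi j i = A i j * (P i j + P j i) := hpair' i j hij
      have hE5 := hQAij i j
      rw [hsplit, hFi, hFj, hFs, hii, hjj, E3, E4]
      have hpij' : xi j i - xi i j = -(A i j * (P i j + P j i)) := by
        rw [← hpij]; ring
      rw [hpij, hpij']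
      linear_combination A i j * hE5
    -- conclude (b) from key
    simp only [Matrix.sub_apply, Matrix.mul_apply]
    have : ∑ l, F l = (∑ l, xi i l * A l j - ∑ l, A i l * xi l j)
        + (∑ l, xi j l * A l i - ∑ l, A j l * xi l i) := by
      simp only [hF]
      rw [Finset.sum_add_distrib, Finset.sum_sub_distrib, Finset.sum_sub_distrib]
    rw [this] at key
    linarith
  -- commutator facts for (c)
  have hxiB : xi * B - B * xi = Matrix.diagonal (fun i => P i i) - P := by
    ext i j
    by_cases h : i = j
    · subst h
      simp [hB, Matrix.sub_apply, Matrix.mul_diagonal, Matrix.diagonal_mul,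
        Matrix.diagonal_apply_eq]
      ring
    · simp only [hB, Matrix.sub_apply, Matrix.mul_diagonal, Matrix.diagonal_mul,
        Matrix.diagonal_apply_ne _ h]
      rw [hxioff _ _ h]
      field_simp [hxne h]
      ring
  have hBA : B * A - A * B = mu := by
    ext i j
    by_cases h : i = j
    · subst h
      simp [hB, hmu, Matrix.sub_apply, Matrix.mul_diagonal, Matrix.diagonal_mul]
      ring
    · simp only [hB, hmu, Matrix.sub_apply, Matrix.mul_diagonal, Matrix.diagonal_mul,
        if_neg h]
      rw [hAoff _ _ h]
      field_simp [hxne h]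
  -- part (c)
  refine ⟨ha, hb, ?_⟩
  have hmuc : xi * (B * A - A * B) - (B * A - A * B) * xi = 0 := by rw [hBA]; exact ha
  set Dp : Mat n := Matrix.diagonal (fun i => P i i) with hDpdef
  rw [hxiB]
  have e1 : Dp - P + P = Dp := by abel
  rw [e1]
  have step2 : B * (xi * A - A * xi) - (xi * A - A * xi) * B
      = (B * xi - xi * B) * A - A * (B * xi - xi * B)
        + (xi * (B * A - A * B) - (B * A - A * B) * xi) := by
    noncomm_ring
  have hBxi : B * xi - xi * B = P - Dp := by
    rw [show P - Dp = -(Dp - P) by abel, ← hxiB]; abel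
  rw [step2, hBxi, hmuc, add_zero]
  have e2 : (P - Dp) * A - A * (P - Dp) = (P * A - A * P) - (Dp * A - A * Dp) := by
    noncomm_ring
  rw [e2, hPA]
  abel
end

section
/- Two-particle Calogero-Moser reduction: let Q = {(x₁,x₂,y₁,y₂) ∈ ℝ⁴ : x₁ < x₂ and |y₁ − y₂|(x₂ − x₁) > 2} and V = {(I₁,I₂,J₁,J₂) ∈ ℝ⁴ : 4I₂ − I₁² > 0 and |J₂ − (1/2) I₁ J₁| > 1}. Then the map Φ : Q → ℝ⁴ defined by Φ(x₁,x₂,y₁,y₂) = ( y₁ + y₂, (1/2)(y₁² + y₂²) − 1/(x₁ − x₂)², x₁ + x₂, x₁y₁ + x₂y₂ ) is a bijection from Q onto V. -/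
/- STATEMENT 15: two-particle Calogero-Moser reduction. The map
Φ(x₁,x₂,y₁,y₂) = (y₁+y₂, (1/2)(y₁²+y₂²) − 1/(x₁−x₂)², x₁+x₂, x₁y₁+x₂y₂)
is a bijection from
Q = {x₁ < x₂, |y₁−y₂|(x₂−x₁) > 2} onto
V = {4I₂ − I₁² > 0, |J₂ − (1/2)I₁J₁| > 1}. -/

/-- Q = {(x₁,x₂,y₁,y₂) : x₁ < x₂ and |y₁ − y₂|(x₂ − x₁) > 2}. -/
def Qset : Set (ℝ × ℝ × ℝ × ℝ) :=
  {p | p.1 < p.2.1 ∧ 2 < |p.2.2.1 - p.2.2.2| * (p.2.1 - p.1)}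

/-- V = {(I₁,I₂,J₁,J₂) : 4I₂ − I₁² > 0 and |J₂ − (1/2)I₁J₁| > 1}. -/
def Vset : Set (ℝ × ℝ × ℝ × ℝ) :=
  {q | 0 < 4 * q.2.1 - q.1 ^ 2 ∧ 1 < |q.2.2.2 - (1 / 2) * q.1 * q.2.2.1|}

/-- Φ(x₁,x₂,y₁,y₂) = (I₁,I₂,J₁,J₂)
= (y₁+y₂, (1/2)(y₁²+y₂²) − 1/(x₁−x₂)², x₁+x₂, x₁y₁+x₂y₂), i.e.
(tr A, (1/2) tr A², tr B, tr(AB)) for A = [[y₁, 1/(x₁−x₂)],[1/(x₂−x₁), y₂]],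
B = diag(x₁,x₂). -/
noncomputable def Phi : ℝ × ℝ × ℝ × ℝ → ℝ × ℝ × ℝ × ℝ :=
  fun p =>
    (p.2.2.1 + p.2.2.2,
     (1 / 2) * (p.2.2.1 ^ 2 + p.2.2.2 ^ 2) - 1 / (p.1 - p.2.1) ^ 2,
     p.1 + p.2.1,
     p.1 * p.2.2.1 + p.2.1 * p.2.2.2)

noncomputable def Psi : ℝ × ℝ × ℝ × ℝ → ℝ × ℝ × ℝ × ℝ :=
  fun q =>
    ((q.2.2.1 - 2 * Real.sqrt (((q.2.2.2 - (1/2)*q.1*q.2.2.1)^2 - 1) / (4*q.2.1 - q.1^2)))/2,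
     (q.2.2.1 + 2 * Real.sqrt (((q.2.2.2 - (1/2)*q.1*q.2.2.1)^2 - 1) / (4*q.2.1 - q.1^2)))/2,
     (q.1 + -2 * (q.2.2.2 - (1/2)*q.1*q.2.2.1) / (2 * Real.sqrt (((q.2.2.2 - (1/2)*q.1*q.2.2.1)^2 - 1) / (4*q.2.1 - q.1^2))))/2,
     (q.1 - -2 * (q.2.2.2 - (1/2)*q.1*q.2.2.1) / (2 * Real.sqrt (((q.2.2.2 - (1/2)*q.1*q.2.2.1)^2 - 1) / (4*q.2.1 - q.1^2))))/2)

lemma maps_phi : Set.MapsTo Phi Qset Vset := by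
  rintro ⟨x₁, x₂, y₁, y₂⟩ ⟨hx, hy⟩
  simp only [Qset, Set.mem_setOf_eq] at hx hy
  have hd : (0:ℝ) < x₂ - x₁ := by linarith
  have h4 : 4 < ((y₁ - y₂) * (x₂ - x₁))^2 := by
    have heq : ((y₁-y₂)*(x₂-x₁))^2 = (|y₁ - y₂| * (x₂ - x₁))^2 := by
      rw [mul_pow, mul_pow, sq_abs]
    nlinarith [heq]
  constructor
  · show (0:ℝ) < 4 * ((1/2)*(y₁^2+y₂^2) - 1/(x₁-x₂)^2) - (y₁+y₂)^2
    have key : 4 * ((1/2)*(y₁^2+y₂^2) - 1/(x₁-x₂)^2) - (y₁+y₂)^2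
        = (((y₁-y₂)*(x₂-x₁))^2 - 4) / (x₂-x₁)^2 := by
      have h2 : (x₁ - x₂) ≠ 0 := by intro h; nlinarith
      field_simp
      ring
    rw [key]
    apply div_pos (by linarith) (by positivity)
  · show (1:ℝ) < |x₁*y₁+x₂*y₂ - (1/2)*(y₁+y₂)*(x₁+x₂)|
    have h : x₁*y₁+x₂*y₂ - (1/2)*(y₁+y₂)*(x₁+x₂) = -(1/2)*((y₁-y₂)*(x₂-x₁)) := by ring
    rw [h, abs_mul, abs_mul, abs_of_pos hd]
    rw [show |(-(1/2):ℝ)| = 1/2 by norm_num]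
    nlinarith

set_option maxHeartbeats 2000000 in
lemma left_inv : Set.LeftInvOn Psi Phi Qset := by
  rintro ⟨x₁, x₂, y₁, y₂⟩ ⟨hx, hy⟩
  simp only [Qset, Set.mem_setOf_eq] at hx hy
  have hd : (0:ℝ) < x₂ - x₁ := by linarith
  have hD : (0:ℝ) < 4 * ((1/2)*(y₁^2+y₂^2) - 1/(x₁-x₂)^2) - (y₁+y₂)^2 :=
    (maps_phi (show (x₁,x₂,y₁,y₂) ∈ Qset from ⟨hx, hy⟩)).1
  simp only [Phi, Psi]
  have harg : ((x₁*y₁+x₂*y₂ - 1/2*(y₁+y₂)*(x₁+x₂))^2 - 1) /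
      (4 * ((1/2)*(y₁^2+y₂^2) - 1/(x₁-x₂)^2) - (y₁+y₂)^2) = ((x₂-x₁)/2)^2 := by
    rw [div_eq_iff (ne_of_gt hD)]
    have h2 : (x₁ - x₂) ≠ 0 := by intro h; nlinarith
    field_simp
    ring
  rw [harg, Real.sqrt_sq (by positivity)]
  have hne : x₂ - x₁ ≠ 0 := ne_of_gt hd
  have hs : -2 * (x₁*y₁+x₂*y₂ - 1/2*(y₁+y₂)*(x₁+x₂)) / (2 * ((x₂-x₁)/2)) = y₁ - y₂ := by
    field_simp
    ring
  rw [hs]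
  simp only [Prod.mk.injEq]
  refine ⟨by ring, by ring, by ring, by ring⟩

lemma d_sq {q : ℝ × ℝ × ℝ × ℝ} (hq : q ∈ Vset) :
    (2 * Real.sqrt (((q.2.2.2 - (1/2)*q.1*q.2.2.1)^2 - 1) / (4*q.2.1 - q.1^2)))^2
      = 4 * ((q.2.2.2 - (1/2)*q.1*q.2.2.1)^2 - 1) / (4*q.2.1 - q.1^2) := by
  obtain ⟨hD, hK⟩ := hq
  have hK2 : (1:ℝ) < (q.2.2.2 - (1/2)*q.1*q.2.2.1)^2 := by
    nlinarith [sq_abs (q.2.2.2 - (1/2)*q.1*q.2.2.1), abs_nonneg (q.2.2.2 - (1/2)*q.1*q.2.2.1)]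
  rw [mul_pow, Real.sq_sqrt (le_of_lt (div_pos (by linarith) hD))]
  ring

lemma d_pos {q : ℝ × ℝ × ℝ × ℝ} (hq : q ∈ Vset) :
    0 < 2 * Real.sqrt (((q.2.2.2 - (1/2)*q.1*q.2.2.1)^2 - 1) / (4*q.2.1 - q.1^2)) := by
  obtain ⟨hD, hK⟩ := hq
  have hK2 : (1:ℝ) < (q.2.2.2 - (1/2)*q.1*q.2.2.1)^2 := by
    nlinarith [sq_abs (q.2.2.2 - (1/2)*q.1*q.2.2.1), abs_nonneg (q.2.2.2 - (1/2)*q.1*q.2.2.1)]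
  have h := div_pos (show (0:ℝ) < (q.2.2.2 - (1/2)*q.1*q.2.2.1)^2 - 1 by linarith) hD
  positivity

lemma maps_psi : Set.MapsTo Psi Vset Qset := by
  rintro ⟨I₁, I₂, J₁, J₂⟩ hq
  obtain ⟨hD, hK⟩ := hq
  simp only at hD hK
  have hdpos : 0 < 2 * Real.sqrt (((J₂ - (1/2)*I₁*J₁)^2 - 1) / (4*I₂ - I₁^2)) :=
    d_pos (q := (I₁, I₂, J₁, J₂)) ⟨hD, hK⟩
  set d := 2 * Real.sqrt (((J₂ - (1/2)*I₁*J₁)^2 - 1) / (4*I₂ - I₁^2)) with hd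
  constructor
  · show (J₁ - d)/2 < (J₁ + d)/2
    linarith
  · show 2 < |(I₁ + -2*(J₂ - (1/2)*I₁*J₁)/d) / 2 - (I₁ - -2*(J₂ - (1/2)*I₁*J₁)/d) / 2| * ((J₁ + d)/2 - (J₁ - d)/2)
    have h1 : (I₁ + -2*(J₂ - (1/2)*I₁*J₁)/d) / 2 - (I₁ - -2*(J₂ - (1/2)*I₁*J₁)/d) / 2
        = (-2*(J₂ - (1/2)*I₁*J₁))/d := by ring
    have h2 : (J₁ + d)/2 - (J₁ - d)/2 = d := by ring
    rw [h1, h2, abs_div, abs_of_pos hdpos, div_mul_cancel₀ _ (ne_of_gt hdpos)]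
    rw [show -2*(J₂ - (1/2)*I₁*J₁) = (-2) * (J₂ - (1/2)*I₁*J₁) by ring, abs_mul]
    rw [show |(-2:ℝ)| = 2 by norm_num]
    linarith

lemma right_inv : Set.RightInvOn Psi Phi Vset := by
  rintro ⟨I₁, I₂, J₁, J₂⟩ hq
  obtain ⟨hD, hK⟩ := hq
  simp only at hD hK
  have hK2 : (1:ℝ) < (J₂ - (1/2)*I₁*J₁)^2 := by
    nlinarith [sq_abs (J₂ - (1/2)*I₁*J₁), abs_nonneg (J₂ - (1/2)*I₁*J₁)]
  have hdpos : 0 < 2 * Real.sqrt (((J₂ - (1/2)*I₁*J₁)^2 - 1) / (4*I₂ - I₁^2)) :=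
    d_pos (q := (I₁, I₂, J₁, J₂)) ⟨hD, hK⟩
  have hd2 : (2 * Real.sqrt (((J₂ - (1/2)*I₁*J₁)^2 - 1) / (4*I₂ - I₁^2)))^2
      = 4 * ((J₂ - (1/2)*I₁*J₁)^2 - 1) / (4*I₂ - I₁^2) :=
    d_sq (q := (I₁, I₂, J₁, J₂)) ⟨hD, hK⟩
  set d := 2 * Real.sqrt (((J₂ - (1/2)*I₁*J₁)^2 - 1) / (4*I₂ - I₁^2)) with hd
  have hdne : d ≠ 0 := ne_of_gt hdpos
  have hDne : 4*I₂ - I₁^2 ≠ 0 := ne_of_gt hD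
  have hd2' : (4*I₂ - I₁^2) * d^2 = 4 * ((J₂ - (1/2)*I₁*J₁)^2 - 1) := by
    rw [hd2]; field_simp
  simp only [Phi, Psi, Prod.mk.injEq]
  rw [← hd]
  refine ⟨by ring, ?_, by ring, ?_⟩
  · have hx : ((J₁ - d)/2 - (J₁ + d)/2)^2 = d^2 := by ring
    rw [hx]
    field_simp
    nlinarith [hd2']
  · field_simp
    ring

theorem two_particle_CM_bijection : Set.BijOn Phi Qset Vset :=
  Set.InvOn.bijOn ⟨left_inv, right_inv⟩ maps_phi maps_psi
end
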